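/- arXiv:cs/0503089 — 4 statements merged into one kernel-verified Lean document; each statement's English description precedes it below -/
import Mathlib

section
/- For every general source p̄ = (p_n) and every ε with 0 < ε ≤ 1, both R†(1−ε|p̄) := inf over all sequences of codes (Φ_n) with liminf_n ε(Φ_n) ≤ 1−ε of limsup_n (1/n) log|Φ_n|, and R‡(1−ε|p̄) := inf over all sequences of codes (Φ_n) with limsup_n ε(Φ_n) ≤ 1−ε of liminf_n (1/n) log|Φ_n|, equal H̲(ε|p̄) := sup{a ∈ ℝ : limsup_n p_n{−(1/n) log p_n(ω) < a} < ε}. -/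
open Filter

noncomputable section

/-- The probability of a set `S` under a probability mass function `p`. -/
def prob {Ω : Type*} (p : Ω → ℝ) (S : Set Ω) : ℝ := ∑' ω : S, p ω

namespace ProbAux

variable {Ω : Type*} {p : Ω → ℝ}

lemma prob_eq (p : Ω → ℝ) (S : Set Ω) : prob p S = ∑' ω, S.indicator p ω := tsum_subtype S p

lemma prob_nonneg (hnn : ∀ ω, 0 ≤ p ω) (S : Set Ω) : 0 ≤ prob p S :=
  tsum_nonneg fun i => hnn i

lemma summable_of_hasSum (hs : HasSum p 1) : Summable p := ⟨1, hs⟩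

lemma prob_mono (hnn : ∀ ω, 0 ≤ p ω) (hs : HasSum p 1) {S T : Set Ω} (h : S ⊆ T) :
    prob p S ≤ prob p T := by
  rw [prob_eq, prob_eq]
  exact Summable.tsum_le_tsum (Set.indicator_le_indicator_of_subset h hnn)
    ((summable_of_hasSum hs).indicator S) ((summable_of_hasSum hs).indicator T)

lemma prob_add_compl (hs : HasSum p 1) (S : Set Ω) : prob p S + prob p Sᶜ = 1 := by
  rw [prob_eq, prob_eq, ← Summable.tsum_add ((summable_of_hasSum hs).indicator S)
    ((summable_of_hasSum hs).indicator Sᶜ)]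
  have : (fun ω => S.indicator p ω + Sᶜ.indicator p ω) = p := by
    ext ω; exact congrFun (Set.indicator_self_add_compl S p) ω
  rw [this, hs.tsum_eq]

lemma prob_le_one (hnn : ∀ ω, 0 ≤ p ω) (hs : HasSum p 1) (S : Set Ω) : prob p S ≤ 1 := by
  have h := prob_add_compl hs S
  have := prob_nonneg hnn (p := p) Sᶜ
  linarith

lemma prob_congr (hnn : ∀ ω, 0 ≤ p ω) {S T : Set Ω} (hST : S ⊆ T)
    (h : ∀ ω ∈ T \ S, p ω = 0) : prob p S = prob p T := by
  rw [prob_eq, prob_eq]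
  congr 1; ext ω
  by_cases hS2 : ω ∈ S
  · rw [Set.indicator_of_mem hS2, Set.indicator_of_mem (hST hS2)]
  · rw [Set.indicator_of_notMem hS2]
    by_cases hT : ω ∈ T
    · rw [Set.indicator_of_mem hT, h ω ⟨hT, hS2⟩]
    · rw [Set.indicator_of_notMem hT]

lemma prob_finset (p : Ω → ℝ) (F : Finset Ω) : prob p ↑F = ∑ ω ∈ F, p ω := by
  rw [prob]; exact Finset.tsum_subtype F p

/-- split bound : prob D ≤ prob A + prob (D \ A) -/
lemma prob_split (hnn : ∀ ω, 0 ≤ p ω) (hs : HasSum p 1) (D A : Set Ω) :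
    prob p D ≤ prob p A + prob p (D \ A) := by
  rw [prob_eq, prob_eq, prob_eq,
    ← Summable.tsum_add ((summable_of_hasSum hs).indicator A) ((summable_of_hasSum hs).indicator (D \ A))]
  refine Summable.tsum_le_tsum (fun ω => ?_) ((summable_of_hasSum hs).indicator D)
    (((summable_of_hasSum hs).indicator A).add ((summable_of_hasSum hs).indicator (D \ A)))
  by_cases hD : ω ∈ D
  · rw [Set.indicator_of_mem hD]
    by_cases hA : ω ∈ A
    · have := Set.indicator_apply_nonneg (s := D \ A) (f := p) (fun _ => hnn ω)
      rw [Set.indicator_of_mem hA]; linarith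
    · have := Set.indicator_apply_nonneg (s := A) (f := p) (fun _ => hnn ω)
      rw [Set.indicator_of_mem (Set.mem_diff_of_mem hD hA)]; linarith
  · rw [Set.indicator_of_notMem hD]
    have h1 := Set.indicator_apply_nonneg (s := A) (f := p) (fun _ => hnn ω)
    have h2 := Set.indicator_apply_nonneg (s := D \ A) (f := p) (fun _ => hnn ω)
    linarith

/-- bound for sets inside a finset where p is small -/
lemma prob_le_card_mul (hnn : ∀ ω, 0 ≤ p ω) {S : Set Ω} {V : Finset Ω} (hSV : S ⊆ ↑V)
    {c : ℝ} (hc : 0 ≤ c) (hpc : ∀ ω ∈ S, p ω ≤ c) : prob p S ≤ V.card * c := by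
  rw [prob_eq]
  have h0 : ∀ ω ∉ V, S.indicator p ω = 0 := fun ω hω =>
    Set.indicator_of_notMem (fun hS => hω (hSV hS)) p
  rw [tsum_eq_sum h0]
  calc ∑ ω ∈ V, S.indicator p ω ≤ ∑ _ω ∈ V, c := by
        refine Finset.sum_le_sum fun ω _ => ?_
        by_cases hS : ω ∈ S
        · rw [Set.indicator_of_mem hS]; exact hpc ω hS
        · rw [Set.indicator_of_notMem hS]; exact hc
    _ = V.card * c := by rw [Finset.sum_const, nsmul_eq_mul]

/-- The set where p exceeds a positive constant is finite with card bound. -/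
lemma finite_gt (hnn : ∀ ω, 0 ≤ p ω) (hs : HasSum p 1) {c : ℝ} (hc : 0 < c) :
    {ω | c < p ω}.Finite ∧ ∀ (h : {ω | c < p ω}.Finite), (h.toFinset.card : ℝ) * c ≤ 1 := by
  have hfin : {ω | c < p ω}.Finite := by
    have hco : ∀ᶠ ω in cofinite, p ω < c :=
      (summable_of_hasSum hs).tendsto_cofinite_zero (Iio_mem_nhds hc)
    rw [Filter.eventually_cofinite] at hco
    exact hco.subset fun ω hω => not_lt.mpr (le_of_lt hω)
  refine ⟨hfin, fun h => ?_⟩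
  have hle : (h.toFinset.card : ℝ) * c ≤ ∑ ω ∈ h.toFinset, p ω := by
    have := Finset.card_nsmul_le_sum h.toFinset p c
      (fun ω hω => le_of_lt (by simpa using (h.mem_toFinset.mp hω)))
    simpa [nsmul_eq_mul] using this
  calc (h.toFinset.card : ℝ) * c ≤ ∑ ω ∈ h.toFinset, p ω := hle
    _ ≤ ∑' ω, p ω := Summable.sum_le_tsum _ (fun ω _ => hnn ω) (summable_of_hasSum hs)
    _ = 1 := hs.tsum_eq

lemma nonempty_of_hasSum (hs : HasSum p 1) : Nonempty Ω := by
  by_contra h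
  have : IsEmpty Ω := not_nonempty_iff.mp h
  have h0 : HasSum p 0 := hasSum_empty
  exact one_ne_zero (hs.unique h0)

/-- a code perfectly encoding a finset -/
lemma exists_code (hs : HasSum p 1) (F : Finset Ω) :
    ∃ (φ : Ω → Fin (F.card + 1)) (ψ : Fin (F.card + 1) → Ω), ∀ ω ∈ F, ψ (φ ω) = ω := by
  classical
  have : Nonempty Ω := nonempty_of_hasSum hs
  let e := F.equivFin
  refine ⟨fun ω => if h : ω ∈ F then (e ⟨ω, h⟩).castSucc else Fin.last _,
    fun i => if h : (i : ℕ) < F.card then ↑(e.symm ⟨i, h⟩) else Classical.arbitrary Ω, ?_⟩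
  intro ω hω
  simp only [dif_pos hω]
  have hlt : ((e ⟨ω, hω⟩).castSucc : ℕ) < F.card := by
    simpa using (e ⟨ω, hω⟩).isLt
  rw [dif_pos hlt]
  have : (⟨((e ⟨ω, hω⟩).castSucc : ℕ), hlt⟩ : Fin F.card) = e ⟨ω, hω⟩ := by
    ext; simp
  rw [this, Equiv.symm_apply_apply]

end ProbAux

namespace ProbAux2
open ProbAux Real

variable {Ω : Type*} {p : Ω → ℝ}

lemma spec_iff {c : ℝ} (hc : 0 < c) (t a : ℝ) : -(1/c)*t < a ↔ -(c*a) < t := by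
  rw [neg_mul, mul_comm (1/c) t, mul_one_div, neg_lt, lt_div_iff₀ hc, neg_mul, mul_comm a c]

lemma ereal_le_of_forall {x y : EReal} (h : ∀ c : ℝ, y < c → x ≤ c) : x ≤ y := by
  by_contra hxy
  push_neg at hxy
  obtain ⟨c, hc1, hc2⟩ := EReal.exists_between_coe_real hxy
  exact absurd (h c hc1) (not_le.mpr hc2)

lemma converse_bound (hnn : ∀ ω, 0 ≤ p ω) (hs : HasSum p 1) {n : ℕ} (hn : 1 ≤ n)
    {a : ℝ} (ha : 0 < a) {M : ℕ} (φ : Ω → Fin M) (ψ : Fin M → Ω) :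
    1 - prob p {ω | -(1/(n:ℝ)) * Real.log (p ω) < a} - M * Real.exp (-((n:ℝ) * a))
      ≤ prob p {ω | ψ (φ ω) ≠ ω} := by
  classical
  set A : Set Ω := {ω | -(1/(n:ℝ)) * Real.log (p ω) < a} with hA
  set D : Set Ω := {ω | ψ (φ ω) = ω} with hD
  have hnpos : (0:ℝ) < (n:ℝ) := by exact_mod_cast hn
  have hn1 : (n:ℝ) * (1/(n:ℝ)) = 1 := by field_simp
  have herr : prob p {ω | ψ (φ ω) ≠ ω} = 1 - prob p D := by
    have h1 := prob_add_compl hs D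
    have h2 : Dᶜ = {ω | ψ (φ ω) ≠ ω} := by rw [hD, Set.compl_setOf]
    rw [← h2]; linarith
  rw [herr]
  have hsplit := prob_split hnn hs D A
  have hbound : prob p (D \ A) ≤ (M:ℝ) * Real.exp (-((n:ℝ) * a)) := by
    have hSV : D \ A ⊆ ↑(Finset.image ψ Finset.univ) := by
      intro ω hω
      simp only [Finset.coe_image, Finset.coe_univ, Set.image_univ]
      exact ⟨φ ω, hω.1⟩
    have hpc : ∀ ω ∈ D \ A, p ω ≤ Real.exp (-((n:ℝ) * a)) := by
      intro ω hω
      have hZ : a ≤ -(1/(n:ℝ)) * Real.log (p ω) := not_lt.mp hω.2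
      have hp0 : 0 < p ω := by
        rcases lt_or_eq_of_le (hnn ω) with h | h
        · exact h
        · exfalso
          rw [← h, Real.log_zero] at hZ
          simp at hZ
          linarith
      have hlog : Real.log (p ω) ≤ -((n:ℝ) * a) :=
        not_lt.mp (fun h => (not_lt.mpr hZ) ((spec_iff hnpos _ a).mpr h))
      exact (Real.log_le_iff_le_exp hp0).mp hlog
    calc prob p (D \ A) ≤ ((Finset.image ψ Finset.univ).card : ℝ) * Real.exp (-((n:ℝ) * a)) :=
          prob_le_card_mul hnn hSV (Real.exp_nonneg _) hpc
      _ ≤ (M:ℝ) * Real.exp (-((n:ℝ) * a)) := by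
          refine mul_le_mul_of_nonneg_right ?_ (Real.exp_nonneg _)
          have := Finset.card_image_le (f := ψ) (s := Finset.univ)
          simp at this
          exact_mod_cast this
  linarith

lemma good_code (hnn : ∀ ω, 0 ≤ p ω) (hs : HasSum p 1) {n : ℕ} (hn : 1 ≤ n)
    {a : ℝ} (ha : 0 < a) :
    ∃ F : Finset Ω, ((F.card : ℝ) ≤ Real.exp ((n:ℝ) * a)) ∧
      prob p ↑F = prob p {ω | -(1/(n:ℝ)) * Real.log (p ω) < a} := by
  have hnpos : (0:ℝ) < (n:ℝ) := by exact_mod_cast hn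
  have hn1 : (n:ℝ) * (1/(n:ℝ)) = 1 := by field_simp
  have hc : 0 < Real.exp (-((n:ℝ) * a)) := Real.exp_pos _
  obtain ⟨hfin, hcard⟩ := finite_gt hnn hs (p := p) hc
  refine ⟨hfin.toFinset, ?_, ?_⟩
  · have h1 := hcard hfin
    have he : Real.exp (-((n:ℝ)*a)) * Real.exp ((n:ℝ)*a) = 1 := by
      rw [← Real.exp_add]; simp
    nlinarith [mul_le_mul_of_nonneg_right h1 (Real.exp_nonneg ((n:ℝ)*a))]
  · refine prob_congr hnn ?_ ?_
    · intro ω hω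
      rw [Set.Finite.coe_toFinset] at hω
      have hp0 : 0 < p ω := lt_trans hc hω
      have hlog : -((n:ℝ) * a) < Real.log (p ω) := by
        have := Real.exp_log hp0
        calc -((n:ℝ)*a) = Real.log (Real.exp (-((n:ℝ)*a))) := (Real.log_exp _).symm
          _ < Real.log (p ω) := Real.log_lt_log hc hω
      show -(1/(n:ℝ)) * Real.log (p ω) < a
      exact (spec_iff hnpos _ a).mpr hlog
    · intro ω hω
      rw [Set.Finite.coe_toFinset] at hω
      obtain ⟨hA, hF⟩ := hω
      by_contra hne
      have hp0 : 0 < p ω := lt_of_le_of_ne (hnn ω) (Ne.symm hne)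
      have hA' : -(1/(n:ℝ)) * Real.log (p ω) < a := hA
      have hlog : -((n:ℝ) * a) < Real.log (p ω) := (spec_iff hnpos _ a).mp hA'
      have : Real.exp (-((n:ℝ)*a)) < p ω := by
        calc Real.exp (-((n:ℝ)*a)) < Real.exp (Real.log (p ω)) := Real.exp_lt_exp.mpr hlog
          _ = p ω := Real.exp_log hp0
      exact hF this
  
lemma exists_big_finset (hs : HasSum p 1) {η : ℝ} (hη : 0 < η) :
    ∃ B : Finset Ω, 1 - η ≤ prob p ↑B := by
  have hs' : Filter.Tendsto (fun s : Finset Ω => ∑ ω ∈ s, p ω) Filter.atTop (nhds 1) := hs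
  have hev : ∀ᶠ s in Filter.atTop, 1 - η < ∑ ω ∈ s, p ω :=
    hs' (eventually_gt_nhds (by linarith))
  obtain ⟨B, hB⟩ := hev.exists
  exact ⟨B, by rw [prob_finset]; linarith⟩

end ProbAux2

namespace MainAux
open ProbAux ProbAux2 Real

variable {Ω : ℕ → Type} {p : ∀ n, Ω n → ℝ}

lemma code_of_finsets (hnn : ∀ n ω, 0 ≤ p n ω) (hs : ∀ n, HasSum (p n) 1)
    (G : ∀ n, Finset (Ω n)) :
    ∃ (M : ℕ → ℕ) (φ : ∀ n, Ω n → Fin (M n)) (ψ : ∀ n, Fin (M n) → Ω n),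
      (∀ n, 0 < M n) ∧ (∀ n, M n = (G n).card + 1) ∧
      (∀ n, prob (p n) {ω | ψ n (φ n ω) ≠ ω} ≤ 1 - prob (p n) ↑(G n)) := by
  refine ⟨fun n => (G n).card + 1, fun n => (exists_code (hs n) (G n)).choose,
    fun n => (exists_code (hs n) (G n)).choose_spec.choose, fun n => Nat.succ_pos _,
    fun n => rfl, fun n => ?_⟩
  have hspec := (exists_code (hs n) (G n)).choose_spec.choose_spec
  have hsub : {ω | (exists_code (hs n) (G n)).choose_spec.choose
      ((exists_code (hs n) (G n)).choose ω) ≠ ω} ⊆ (↑(G n) : Set (Ω n))ᶜ :=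
    fun ω hω hmem => hω (hspec ω hmem)
  have h1 := prob_mono (hnn n) (hs n) hsub
  have h2 := prob_add_compl (hs n) (↑(G n) : Set (Ω n))
  linarith

lemma rate_le {n : ℕ} (hn : 1 ≤ n) {a x : ℝ} (ha : 0 ≤ a) (hx0 : 0 ≤ x)
    (hx : x ≤ Real.exp ((n:ℝ)*a)) :
    Real.log (x + 1) / (n:ℝ) ≤ a + Real.log 2 / (n:ℝ) := by
  have hnpos : (0:ℝ) < (n:ℝ) := by exact_mod_cast hn
  have h1 : (1:ℝ) ≤ Real.exp ((n:ℝ)*a) := by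
    rw [← Real.exp_zero]; exact Real.exp_le_exp.mpr (by positivity)
  have h2 : x + 1 ≤ 2 * Real.exp ((n:ℝ)*a) := by linarith
  have hlog : Real.log (x+1) ≤ Real.log 2 + (n:ℝ)*a := by
    calc Real.log (x+1) ≤ Real.log (2*Real.exp ((n:ℝ)*a)) :=
          Real.log_le_log (by linarith) h2
      _ = Real.log 2 + (n:ℝ)*a := by
          rw [Real.log_mul two_ne_zero (Real.exp_ne_zero _), Real.log_exp]
  rw [div_le_iff₀ hnpos]
  have heq : (a + Real.log 2 / (n:ℝ)) * (n:ℝ) = (n:ℝ)*a + Real.log 2 := by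
    field_simp
  rw [heq]; linarith

open Filter in
lemma freq_gt (hnn : ∀ n ω, 0 ≤ p n ω) {ε a δ : ℝ} (hδ : 0 < δ)
    (hlim : ε ≤ limsup (fun n => prob (p n) {ω | -(1/(n:ℝ)) * Real.log (p n ω) < a}) atTop) :
    ∃ᶠ n in atTop, ε - δ < prob (p n) {ω | -(1/(n:ℝ)) * Real.log (p n ω) < a} := by
  by_contra h
  rw [Filter.not_frequently] at h
  have hev : ∀ᶠ n in atTop,
      prob (p n) {ω | -(1/(n:ℝ)) * Real.log (p n ω) < a} ≤ ε - δ := by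
    filter_upwards [h] with n hn
    exact not_lt.mp hn
  have hbdd : IsBoundedUnder (· ≥ ·) atTop
      (fun n => prob (p n) {ω | -(1/(n:ℝ)) * Real.log (p n ω) < a}) :=
    isBoundedUnder_of ⟨0, fun n => prob_nonneg (hnn n) _⟩
  have := Filter.limsup_le_of_le hbdd.isCoboundedUnder_le hev
  linarith

open Filter in
lemma ach1 (hnn : ∀ n ω, 0 ≤ p n ω) (hs : ∀ n, HasSum (p n) 1)
    {ε : ℝ} (hε0 : 0 < ε) {a c : ℝ} (ha : 0 < a) (hac : a < c)
    (hlim : ε ≤ limsup (fun n => prob (p n) {ω | -(1/(n:ℝ)) * Real.log (p n ω) < a}) atTop) :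
    ∃ (M : ℕ → ℕ) (φ : ∀ n, Ω n → Fin (M n)) (ψ : ∀ n, Fin (M n) → Ω n),
      (∀ n, 0 < M n) ∧
      Filter.liminf (fun n => prob (p n) {ω | ψ n (φ n ω) ≠ ω}) atTop ≤ 1 - ε ∧
      Filter.limsup (fun n => ((Real.log (M n) / n : ℝ) : EReal)) atTop ≤ (c : EReal) := by
  classical
  set F : ∀ n, Finset (Ω n) := fun n =>
    if h : 1 ≤ n then (good_code (hnn n) (hs n) h ha).choose else ∅ with hF
  have hF1 : ∀ n, 1 ≤ n → ((F n).card : ℝ) ≤ Real.exp ((n:ℝ)*a) ∧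
      prob (p n) ↑(F n) = prob (p n) {ω | -(1/(n:ℝ)) * Real.log (p n ω) < a} := by
    intro n h
    simp only [hF, dif_pos h]
    exact (good_code (hnn n) (hs n) h ha).choose_spec
  obtain ⟨M, φ, ψ, hM, hMeq, herr⟩ := code_of_finsets hnn hs F
  refine ⟨M, φ, ψ, hM, ?_, ?_⟩
  · -- liminf error ≤ 1 - ε
    refine le_of_forall_pos_le_add (fun δ hδ => ?_)
    have hbd : Filter.IsBoundedUnder (· ≥ ·) Filter.atTop
        (fun n => prob (p n) {ω | ψ n (φ n ω) ≠ ω}) :=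
      isBoundedUnder_of ⟨0, fun n => prob_nonneg (hnn n) _⟩
    refine Filter.liminf_le_of_frequently_le ?_ hbd
    have hfr := freq_gt hnn hδ hlim
    refine (hfr.and_eventually (eventually_ge_atTop 1)).mono ?_
    rintro n ⟨h1, h2⟩
    have := herr n
    rw [(hF1 n h2).2] at this
    linarith
  · -- limsup rate ≤ c
    refine Filter.limsup_le_of_le (by isBoundedDefault) ?_
    have hev : ∀ᶠ n : ℕ in atTop, Real.log 2 / (n:ℝ) < c - a :=
      (tendsto_const_div_atTop_nhds_zero_nat (Real.log 2)).eventually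
        (Iio_mem_nhds (by linarith))
    filter_upwards [hev, eventually_ge_atTop 1] with n h1 h2
    have hMcast : ((M n : ℕ) : ℝ) = ((F n).card : ℝ) + 1 := by
      rw [hMeq n]; push_cast; ring
    have hrate : Real.log (M n) / (n:ℝ) ≤ a + Real.log 2 / (n:ℝ) := by
      rw [hMcast]
      exact rate_le h2 ha.le (Nat.cast_nonneg _) (hF1 n h2).1
    have : Real.log (M n) / (n:ℝ) ≤ c := by linarith
    exact_mod_cast EReal.coe_le_coe_iff.mpr this

open Filter in
lemma ach2 (hnn : ∀ n ω, 0 ≤ p n ω) (hs : ∀ n, HasSum (p n) 1)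
    {ε : ℝ} (hε0 : 0 < ε) (hε1 : ε ≤ 1) {a c : ℝ} (ha : 0 < a) (hac : a < c)
    (hlim : ε ≤ limsup (fun n => prob (p n) {ω | -(1/(n:ℝ)) * Real.log (p n ω) < a}) atTop) :
    ∃ (M : ℕ → ℕ) (φ : ∀ n, Ω n → Fin (M n)) (ψ : ∀ n, Fin (M n) → Ω n),
      (∀ n, 0 < M n) ∧
      Filter.limsup (fun n => prob (p n) {ω | ψ n (φ n ω) ≠ ω}) atTop ≤ 1 - ε ∧
      Filter.liminf (fun n => ((Real.log (M n) / n : ℝ) : EReal)) atTop ≤ (c : EReal) := by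
  classical
  set F : ∀ n, Finset (Ω n) := fun n =>
    if h : 1 ≤ n then (good_code (hnn n) (hs n) h ha).choose else ∅ with hF
  have hF1 : ∀ n, 1 ≤ n → ((F n).card : ℝ) ≤ Real.exp ((n:ℝ)*a) ∧
      prob (p n) ↑(F n) = prob (p n) {ω | -(1/(n:ℝ)) * Real.log (p n ω) < a} := by
    intro n h
    simp only [hF, dif_pos h]
    exact (good_code (hnn n) (hs n) h ha).choose_spec
  set B : ∀ n, Finset (Ω n) := fun n =>
    (exists_big_finset (hs n) (η := 1/((n:ℝ)+1)) (by positivity)).choose with hB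
  have hB1 : ∀ n : ℕ, 1 - 1/((n:ℝ)+1) ≤ prob (p n) ↑(B n) := fun n =>
    (exists_big_finset (hs n) (η := 1/((n:ℝ)+1)) (by positivity)).choose_spec
  -- extract subsequence
  have hfr : ∀ k : ℕ, ∃ᶠ n in atTop, 1 ≤ n ∧
      ε - 1/((k:ℝ)+1) < prob (p n) {ω | -(1/(n:ℝ)) * Real.log (p n ω) < a} :=
    fun k => (eventually_ge_atTop 1).and_frequently (freq_gt hnn (by positivity) hlim)
  obtain ⟨s, hsmono, hsP⟩ := Filter.extraction_forall_of_frequently hfr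
  set G : ∀ n, Finset (Ω n) := fun n => if h : ∃ k, s k = n then F n else B n with hG
  obtain ⟨M, φ, ψ, hM, hMeq, herr⟩ := code_of_finsets hnn hs G
  refine ⟨M, φ, ψ, hM, ?_, ?_⟩
  · -- limsup error ≤ 1 - ε
    refine le_of_forall_pos_le_add (fun δ hδ => ?_)
    have hbd : Filter.IsBoundedUnder (· ≥ ·) Filter.atTop
        (fun n => prob (p n) {ω | ψ n (φ n ω) ≠ ω}) :=
      isBoundedUnder_of ⟨0, fun n => prob_nonneg (hnn n) _⟩
    refine Filter.limsup_le_of_le hbd.isCoboundedUnder_le ?_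
    obtain ⟨K, hK⟩ := exists_nat_gt (1/δ)
    have hKδ : 1/((K:ℝ)+1) < δ := by
      rw [div_lt_iff₀ (by positivity)]
      have h1 : 1/δ * δ = 1 := by field_simp
      nlinarith
    filter_upwards [eventually_ge_atTop (s K), eventually_ge_atTop K] with n h1 h2
    by_cases h : ∃ k, s k = n
    · obtain ⟨k, hk⟩ := h
      have hGn : G n = F n := by rw [hG]; exact dif_pos ⟨k, hk⟩
      have hn1 : 1 ≤ n := hk ▸ (hsP k).1
      have hkK : K ≤ k := by
        rw [← hsmono.le_iff_le]
        exact hk ▸ h1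
      have hkδ : 1/((k:ℝ)+1) ≤ 1/((K:ℝ)+1) := by
        apply one_div_le_one_div_of_le (by positivity)
        have : (K:ℝ) ≤ (k:ℝ) := by exact_mod_cast hkK
        linarith
      have hE := (hsP k).2
      rw [hk] at hE
      have := herr n
      rw [hGn, (hF1 n hn1).2] at this
      linarith
    · have hGn : G n = B n := by rw [hG]; exact dif_neg h
      have := herr n
      rw [hGn] at this
      have h3 := hB1 n
      have h4 : 1/((n:ℝ)+1) ≤ 1/((K:ℝ)+1) := by
        apply one_div_le_one_div_of_le (by positivity)
        have : (K:ℝ) ≤ (n:ℝ) := by exact_mod_cast h2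
        linarith
      linarith
  · -- liminf rate ≤ c
    refine Filter.liminf_le_of_frequently_le ?_
    -- obtain N₀ for rate bound
    have hev : ∀ᶠ n : ℕ in atTop, Real.log 2 / (n:ℝ) < c - a :=
      (tendsto_const_div_atTop_nhds_zero_nat (Real.log 2)).eventually
        (Iio_mem_nhds (by linarith))
    obtain ⟨N₀, hN₀⟩ := eventually_atTop.mp hev
    rw [Filter.frequently_atTop]
    intro N
    refine ⟨s (max N N₀), le_trans (le_max_left N N₀) (hsmono.le_apply), ?_⟩
    set n := s (max N N₀) with hn
    have hn1 : 1 ≤ n := (hsP (max N N₀)).1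
    have hnN₀ : N₀ ≤ n := le_trans (le_max_right N N₀) (hsmono.le_apply)
    have hGn : G n = F n := by rw [hG]; exact dif_pos ⟨max N N₀, rfl⟩
    have hMcast : ((M n : ℕ) : ℝ) = ((F n).card : ℝ) + 1 := by
      rw [hMeq n, hGn]; push_cast; ring
    have hrate : Real.log (M n) / (n:ℝ) ≤ a + Real.log 2 / (n:ℝ) := by
      rw [hMcast]
      exact rate_le hn1 ha.le (Nat.cast_nonneg _) (hF1 n hn1).1
    have : Real.log (M n) / (n:ℝ) ≤ c := by
      have := hN₀ n hnN₀
      linarith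
    exact_mod_cast EReal.coe_le_coe_iff.mpr this

open Filter in
lemma rate_nonneg_limsup {M : ℕ → ℕ} (hM : ∀ n, 0 < M n) :
    (0 : EReal) ≤ Filter.limsup (fun n => ((Real.log (M n) / n : ℝ) : EReal)) atTop := by
  have h : ∀ n : ℕ, (0 : EReal) ≤ ((Real.log (M n) / n : ℝ) : EReal) := by
    intro n
    rw [show (0:EReal) = ((0:ℝ) : EReal) by norm_cast, EReal.coe_le_coe_iff]
    apply div_nonneg _ (Nat.cast_nonneg n)
    exact Real.log_nonneg (by exact_mod_cast hM n)
  exact Filter.le_limsup_of_frequently_le ((Filter.Eventually.of_forall h).frequently)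

open Filter in
lemma rate_nonneg_liminf {M : ℕ → ℕ} (hM : ∀ n, 0 < M n) :
    (0 : EReal) ≤ Filter.liminf (fun n => ((Real.log (M n) / n : ℝ) : EReal)) atTop := by
  have h : ∀ n : ℕ, (0 : EReal) ≤ ((Real.log (M n) / n : ℝ) : EReal) := by
    intro n
    rw [show (0:EReal) = ((0:ℝ) : EReal) by norm_cast, EReal.coe_le_coe_iff]
    apply div_nonneg _ (Nat.cast_nonneg n)
    exact Real.log_nonneg (by exact_mod_cast hM n)
  exact Filter.le_liminf_of_le (by isBoundedDefault) (Filter.Eventually.of_forall h)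

open Filter in
lemma zero_spec (hnn : ∀ n ω, 0 ≤ p n ω) (hs : ∀ n, HasSum (p n) 1) {ε : ℝ} (hε0 : 0 < ε) :
    Filter.limsup
      (fun n => prob (p n) {ω | -(1/(n:ℝ)) * Real.log (p n ω) < (0:ℝ)}) atTop < ε := by
  have hzero : (fun n => prob (p n) {ω | -(1/(n:ℝ)) * Real.log (p n ω) < (0:ℝ)})
      = fun _ => (0:ℝ) := by
    funext n
    have hempty : {ω | -(1/(n:ℝ)) * Real.log (p n ω) < (0:ℝ)} = (∅ : Set (Ω n)) := by
      rw [Set.eq_empty_iff_forall_notMem]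
      intro ω hω
      simp only [Set.mem_setOf_eq] at hω
      rcases Nat.eq_zero_or_pos n with h | h
      · subst h; simp at hω
      · have hp1 : p n ω ≤ 1 := le_hasSum (hs n) ω (fun j _ => hnn n j)
        have hlog : Real.log (p n ω) ≤ 0 := Real.log_nonpos (hnn n ω) hp1
        have : 0 ≤ -(1/(n:ℝ)) * Real.log (p n ω) := by
          rw [neg_mul_comm]
          exact mul_nonneg (by positivity) (neg_nonneg.mpr hlog)
        linarith
    rw [hempty]
    show prob (p n) ∅ = 0
    rw [prob]
    exact tsum_empty
  rw [hzero, Filter.limsup_const]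
  exact hε0

open Filter in
lemma conv_lemma (hnn : ∀ n ω, 0 ≤ p n ω) (hs : ∀ n, HasSum (p n) 1)
    {ε : ℝ} (hε0 : 0 < ε) {a : ℝ} (ha : 0 < a)
    (hspec : Filter.limsup
      (fun n => prob (p n) {ω | -(1/(n:ℝ)) * Real.log (p n ω) < a}) atTop < ε)
    {M : ℕ → ℕ} (φ : ∀ n, Ω n → Fin (M n)) (ψ : ∀ n, Fin (M n) → Ω n) (hM : ∀ n, 0 < M n) :
    (Filter.liminf (fun n => prob (p n) {ω | ψ n (φ n ω) ≠ ω}) atTop ≤ 1 - ε →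
      (a : EReal) ≤ Filter.limsup (fun n => ((Real.log (M n) / n : ℝ) : EReal)) atTop) ∧
    (Filter.limsup (fun n => prob (p n) {ω | ψ n (φ n ω) ≠ ω}) atTop ≤ 1 - ε →
      (a : EReal) ≤ Filter.liminf (fun n => ((Real.log (M n) / n : ℝ) : EReal)) atTop) := by
  set L := Filter.limsup
    (fun n => prob (p n) {ω | -(1/(n:ℝ)) * Real.log (p n ω) < a}) atTop with hL
  set κ := ε - L with hκ
  have hκpos : 0 < κ := by rw [hκ]; linarith
  have hev1 : ∀ᶠ n in atTop,
      prob (p n) {ω | -(1/(n:ℝ)) * Real.log (p n ω) < a} < ε - κ/2 := by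
    apply Filter.eventually_lt_of_limsup_lt
    · rw [← hL]; linarith
    · exact isBoundedUnder_of ⟨1, fun n => prob_le_one (hnn n) (hs n) _⟩
  have key : ∀ a'' : ℝ, 0 < a'' → a'' < a →
      ∀ᶠ n in atTop, (((Real.log (M n) / n : ℝ) : EReal) < (a'' : EReal) →
        1 - ε + κ/4 ≤ prob (p n) {ω | ψ n (φ n ω) ≠ ω}) := by
    intro a'' ha''0 ha''a
    have hten : Filter.Tendsto (fun n : ℕ => Real.exp (a''-a) ^ n) atTop (nhds 0) :=
      tendsto_pow_atTop_nhds_zero_of_lt_one (Real.exp_nonneg _)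
        (Real.exp_lt_one_iff.mpr (by linarith))
    have hev2 : ∀ᶠ n : ℕ in atTop, Real.exp (a''-a) ^ n < κ/4 :=
      hten.eventually (Iio_mem_nhds (by positivity))
    filter_upwards [hev1, hev2, eventually_ge_atTop 1] with n h1 h2 hn1 hr
    have hnpos : (0:ℝ) < (n:ℝ) := by exact_mod_cast hn1
    have hrr : Real.log (M n) / (n:ℝ) < a'' := EReal.coe_lt_coe_iff.mp hr
    have hMpos : (0:ℝ) < (M n : ℝ) := by exact_mod_cast hM n
    have hlogM : Real.log (M n) < a'' * n := by
      rw [div_lt_iff₀ hnpos] at hrr; linarith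
    have hMlt : ((M n : ℕ) : ℝ) < Real.exp (a'' * n) := by
      rw [← Real.exp_log hMpos]
      exact Real.exp_lt_exp.mpr hlogM
    have hprod : ((M n : ℕ) : ℝ) * Real.exp (-((n:ℝ)*a)) < κ/4 := by
      have hstep : ((M n : ℕ) : ℝ) * Real.exp (-((n:ℝ)*a))
          < Real.exp (a'' * n) * Real.exp (-((n:ℝ)*a)) :=
        mul_lt_mul_of_pos_right hMlt (Real.exp_pos _)
      have heq : Real.exp (a'' * n) * Real.exp (-((n:ℝ)*a)) = Real.exp (a''-a) ^ n := by
        rw [← Real.exp_add, ← Real.exp_nat_mul]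
        ring_nf
      rw [heq] at hstep
      linarith
    have hcb := converse_bound (hnn n) (hs n) hn1 ha (φ n) (ψ n)
    linarith
  constructor
  · intro hliminf
    by_contra h
    push_neg at h
    have h0 : (0:EReal) ≤ Filter.limsup (fun n => ((Real.log (M n) / n : ℝ) : EReal)) atTop :=
      rate_nonneg_limsup hM
    obtain ⟨a'', h1, h2⟩ := EReal.exists_between_coe_real h
    have ha''a : a'' < a := EReal.coe_lt_coe_iff.mp h2
    have ha''0 : 0 < a'' := by
      have : ((0:ℝ) : EReal) < (a'' : EReal) := lt_of_le_of_lt (by exact_mod_cast h0) h1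
      exact_mod_cast EReal.coe_lt_coe_iff.mp this
    have hev := Filter.eventually_lt_of_limsup_lt h1
    have hcomb := (key a'' ha''0 ha''a).and hev
    have hlow : ∀ᶠ n in atTop, 1 - ε + κ/4 ≤ prob (p n) {ω | ψ n (φ n ω) ≠ ω} := by
      filter_upwards [hcomb] with n ⟨hk, hlt⟩
      exact hk hlt
    have hbd : Filter.IsBoundedUnder (· ≤ ·) Filter.atTop
        (fun n => prob (p n) {ω | ψ n (φ n ω) ≠ ω}) :=
      isBoundedUnder_of ⟨1, fun n => prob_le_one (hnn n) (hs n) _⟩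
    have := Filter.le_liminf_of_le hbd.isCoboundedUnder_ge hlow
    linarith [le_trans this hliminf]
  · intro hlimsup
    by_contra h
    push_neg at h
    have h0 : (0:EReal) ≤ Filter.liminf (fun n => ((Real.log (M n) / n : ℝ) : EReal)) atTop :=
      rate_nonneg_liminf hM
    obtain ⟨a'', h1, h2⟩ := EReal.exists_between_coe_real h
    have ha''a : a'' < a := EReal.coe_lt_coe_iff.mp h2
    have ha''0 : 0 < a'' := by
      have : ((0:ℝ) : EReal) < (a'' : EReal) := lt_of_le_of_lt (by exact_mod_cast h0) h1
      exact_mod_cast EReal.coe_lt_coe_iff.mp this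
    have hfv := Filter.frequently_lt_of_liminf_lt (by isBoundedDefault) h1
    have hlow : ∃ᶠ n in atTop, 1 - ε + κ/4 ≤ prob (p n) {ω | ψ n (φ n ω) ≠ ω} := by
      refine (hfv.and_eventually (key a'' ha''0 ha''a)).mono ?_
      rintro n ⟨hlt, hk⟩
      exact hk hlt
    have hbd : Filter.IsBoundedUnder (· ≤ ·) Filter.atTop
        (fun n => prob (p n) {ω | ψ n (φ n ω) ≠ ω}) :=
      isBoundedUnder_of ⟨1, fun n => prob_le_one (hnn n) (hs n) _⟩
    have := Filter.le_limsup_of_frequently_le hlow hbd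
    linarith [le_trans this hlimsup]

end MainAux

/-- For every general source and every `0 < ε ≤ 1`,
both `R†(1-ε|p̄)` and `R‡(1-ε|p̄)` equal `H̲(ε|p̄)`. -/
theorem fixed_length_dagger_ddagger_rates_eq_spectral_inf
    (Ω : ℕ → Type) [∀ n, Countable (Ω n)]
    (p : ∀ n, Ω n → ℝ)
    (hnonneg : ∀ n ω, 0 ≤ p n ω)
    (hsum : ∀ n, HasSum (p n) 1)
    (ε : ℝ) (hε0 : 0 < ε) (hε1 : ε ≤ 1) :
    (sInf { r : EReal |
      ∃ (M : ℕ → ℕ) (φ : ∀ n, Ω n → Fin (M n)) (ψ : ∀ n, Fin (M n) → Ω n),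
        (∀ n, 0 < M n) ∧
        Filter.liminf (fun n => prob (p n) {ω | ψ n (φ n ω) ≠ ω}) atTop ≤ 1 - ε ∧
        r = Filter.limsup (fun n => ((Real.log (M n) / n : ℝ) : EReal)) atTop }
      = sSup { x : EReal | ∃ a : ℝ, x = (a : EReal) ∧
          Filter.limsup
            (fun n => prob (p n) {ω | -(1 / (n : ℝ)) * Real.log (p n ω) < a}) atTop < ε })
    ∧
    (sInf { r : EReal |
      ∃ (M : ℕ → ℕ) (φ : ∀ n, Ω n → Fin (M n)) (ψ : ∀ n, Fin (M n) → Ω n),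
        (∀ n, 0 < M n) ∧
        Filter.limsup (fun n => prob (p n) {ω | ψ n (φ n ω) ≠ ω}) atTop ≤ 1 - ε ∧
        r = Filter.liminf (fun n => ((Real.log (M n) / n : ℝ) : EReal)) atTop }
      = sSup { x : EReal | ∃ a : ℝ, x = (a : EReal) ∧
          Filter.limsup
            (fun n => prob (p n) {ω | -(1 / (n : ℝ)) * Real.log (p n ω) < a}) atTop < ε }) := by
  open ProbAux ProbAux2 MainAux in
  constructor
  · apply le_antisymm
    · -- sInf ≤ sSup (achievability, dagger)
      apply ereal_le_of_forall
      intro c hc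
      have h0mem : ((0:ℝ) : EReal) ∈ { x : EReal | ∃ a : ℝ, x = (a : EReal) ∧
          Filter.limsup
            (fun n => prob (p n) {ω | -(1 / (n : ℝ)) * Real.log (p n ω) < a}) atTop < ε } :=
        ⟨0, rfl, zero_spec hnonneg hsum hε0⟩
      have h0le := le_sSup h0mem
      obtain ⟨a, ha1, ha2⟩ := EReal.exists_between_coe_real hc
      have hapos : 0 < a := EReal.coe_lt_coe_iff.mp (lt_of_le_of_lt h0le ha1)
      have hac : a < c := EReal.coe_lt_coe_iff.mp ha2
      have hnot : ε ≤ Filter.limsup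
          (fun n => prob (p n) {ω | -(1 / (n : ℝ)) * Real.log (p n ω) < a}) atTop := by
        by_contra h
        push_neg at h
        have hmem : ((a:ℝ) : EReal) ∈ { x : EReal | ∃ a : ℝ, x = (a : EReal) ∧
            Filter.limsup
              (fun n => prob (p n) {ω | -(1 / (n : ℝ)) * Real.log (p n ω) < a}) atTop < ε } :=
          ⟨a, rfl, h⟩
        exact absurd (le_sSup hmem) (not_le.mpr ha1)
      obtain ⟨M, φ, ψ, hM, herr, hrate⟩ := ach1 hnonneg hsum hε0 hapos hac hnot
      exact le_trans (sInf_le ⟨M, φ, ψ, hM, herr, rfl⟩) hrate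
    · -- sSup ≤ sInf (converse, dagger)
      refine le_sInf (fun r hr => sSup_le (fun x hx => ?_))
      obtain ⟨M, φ, ψ, hM, herr, rfl⟩ := hr
      obtain ⟨a, rfl, hspec⟩ := hx
      rcases le_or_gt a 0 with hle | hpos
      · have h1 : (a : EReal) ≤ (0 : EReal) := by exact_mod_cast hle
        exact le_trans h1 (rate_nonneg_limsup hM)
      · exact (conv_lemma hnonneg hsum hε0 hpos hspec φ ψ hM).1 herr
  · apply le_antisymm
    · -- sInf ≤ sSup (achievability, ddagger)
      apply ereal_le_of_forall
      intro c hc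
      have h0mem : ((0:ℝ) : EReal) ∈ { x : EReal | ∃ a : ℝ, x = (a : EReal) ∧
          Filter.limsup
            (fun n => prob (p n) {ω | -(1 / (n : ℝ)) * Real.log (p n ω) < a}) atTop < ε } :=
        ⟨0, rfl, zero_spec hnonneg hsum hε0⟩
      have h0le := le_sSup h0mem
      obtain ⟨a, ha1, ha2⟩ := EReal.exists_between_coe_real hc
      have hapos : 0 < a := EReal.coe_lt_coe_iff.mp (lt_of_le_of_lt h0le ha1)
      have hac : a < c := EReal.coe_lt_coe_iff.mp ha2
      have hnot : ε ≤ Filter.limsup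
          (fun n => prob (p n) {ω | -(1 / (n : ℝ)) * Real.log (p n ω) < a}) atTop := by
        by_contra h
        push_neg at h
        have hmem : ((a:ℝ) : EReal) ∈ { x : EReal | ∃ a : ℝ, x = (a : EReal) ∧
            Filter.limsup
              (fun n => prob (p n) {ω | -(1 / (n : ℝ)) * Real.log (p n ω) < a}) atTop < ε } :=
          ⟨a, rfl, h⟩
        exact absurd (le_sSup hmem) (not_le.mpr ha1)
      obtain ⟨M, φ, ψ, hM, herr, hrate⟩ := ach2 hnonneg hsum hε0 hε1 hapos hac hnot
      exact le_trans (sInf_le ⟨M, φ, ψ, hM, herr, rfl⟩) hrate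
    · -- sSup ≤ sInf (converse, ddagger)
      refine le_sInf (fun r hr => sSup_le (fun x hx => ?_))
      obtain ⟨M, φ, ψ, hM, herr, rfl⟩ := hr
      obtain ⟨a, rfl, hspec⟩ := hx
      rcases le_or_gt a 0 with hle | hpos
      · have h1 : (a : EReal) ≤ (0 : EReal) := by exact_mod_cast hle
        exact le_trans h1 (rate_nonneg_liminf hM)
      · exact (conv_lemma hnonneg hsum hε0 hpos hspec φ ψ hM).2 herr
end
end

section
/- For every general source p̄ = (p_n) and every ε with 0 ≤ ε < 1: R₊(1−ε|p̄) := inf over all sequences of codes (Φ_n) with limsup_n ε(Φ_n) < 1−ε of limsup_n (1/n) log|Φ_n| equals H̄₊(ε|p̄) := sup{a ∈ ℝ : liminf_n p_n{−(1/n) log p_n(ω) < a} ≤ ε}; moreover R₊†(1−ε|p̄) := inf over sequences with liminf_n ε(Φ_n) < 1−ε of limsup_n (1/n) log|Φ_n| and R₊‡(1−ε|p̄) := inf over sequences with limsup_n ε(Φ_n) < 1−ε of liminf_n (1/n) log|Φ_n| both equal H̲₊(ε|p̄) := sup{a ∈ ℝ : limsup_n p_n{−(1/n) log p_n(ω) <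 a} ≤ ε}. -/
open Filter

noncomputable section

section problem
variable {α : Type*} {p : α → ℝ}

lemma prob_eq_indicator (p : α → ℝ) (S : Set α) : prob p S = ∑' a, S.indicator p a :=
  tsum_subtype S p

lemma prob_nonneg (hp : ∀ a, 0 ≤ p a) (S : Set α) : 0 ≤ prob p S :=
  tsum_nonneg (fun a => hp a)

lemma prob_mono (hp : ∀ a, 0 ≤ p a) (hs : Summable p) {S T : Set α} (h : S ⊆ T) :
    prob p S ≤ prob p T := by
  rw [prob_eq_indicator, prob_eq_indicator]
  exact Summable.tsum_le_tsum (fun a => Set.indicator_le_indicator_of_subset h hp a)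
    (hs.indicator S) (hs.indicator T)

lemma prob_union_le (hp : ∀ a, 0 ≤ p a) (hs : Summable p) (S T : Set α) :
    prob p (S ∪ T) ≤ prob p S + prob p T := by
  rw [prob_eq_indicator, prob_eq_indicator, prob_eq_indicator]
  rw [← Summable.tsum_add (hs.indicator S) (hs.indicator T)]
  refine Summable.tsum_le_tsum (fun a => ?_) (hs.indicator _) ((hs.indicator S).add (hs.indicator T))
  by_cases h1 : a ∈ S
  · rw [Set.indicator_of_mem (Set.mem_union_left _ h1), Set.indicator_of_mem h1]
    have := Set.indicator_nonneg (fun x _ => hp x) (s := T) a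
    linarith
  · by_cases h2 : a ∈ T
    · rw [Set.indicator_of_mem (Set.mem_union_right _ h2), Set.indicator_of_mem h2,
        Set.indicator_of_notMem h1]
      linarith
    · rw [Set.indicator_of_notMem (fun h => h.elim h1 h2), Set.indicator_of_notMem h1,
        Set.indicator_of_notMem h2]
      linarith

lemma prob_univ (h1 : HasSum p 1) : prob p Set.univ = 1 := by
  rw [prob_eq_indicator]; simp [h1.tsum_eq]

lemma prob_le_one (hp : ∀ a, 0 ≤ p a) (h1 : HasSum p 1) (S : Set α) : prob p S ≤ 1 := by
  rw [← prob_univ h1]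
  exact prob_mono hp h1.summable (Set.subset_univ S)

lemma prob_compl (hp : ∀ a, 0 ≤ p a) (h1 : HasSum p 1) (S : Set α) :
    prob p Sᶜ = 1 - prob p S := by
  have hsum : prob p S + prob p Sᶜ = 1 := by
    rw [prob_eq_indicator, prob_eq_indicator,
      ← Summable.tsum_add (h1.summable.indicator S) (h1.summable.indicator Sᶜ), ← h1.tsum_eq]
    congr 1
    ext a
    by_cases h : a ∈ S
    · simp [Set.indicator_of_mem h, Set.indicator_of_notMem (by simpa using h : a ∉ Sᶜ)]
    · simp [Set.indicator_of_notMem h, Set.indicator_of_mem (by simpa using h : a ∈ Sᶜ)]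
  linarith

lemma prob_zero {S : Set α} (h : ∀ a ∈ S, p a = 0) : prob p S = 0 := by
  calc prob p S = ∑' _ : S, (0:ℝ) := tsum_congr (fun a => h a a.2)
  _ = 0 := tsum_zero

lemma prob_le_of_ae (hp : ∀ a, 0 ≤ p a) (hs : Summable p) {S S' : Set α}
    (h : ∀ a ∈ S, a ∈ S' ∨ p a = 0) : prob p S ≤ prob p S' := by
  have h1 : S ⊆ S' ∪ {a ∈ S | p a = 0} := fun a ha => (h a ha).imp id (fun h0 => ⟨ha, h0⟩)
  calc prob p S ≤ prob p (S' ∪ {a ∈ S | p a = 0}) := prob_mono hp hs h1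
  _ ≤ prob p S' + prob p {a ∈ S | p a = 0} := prob_union_le hp hs _ _
  _ = prob p S' := by rw [prob_zero (fun a ha => (Set.mem_sep_iff.1 ha).2)]; ring

lemma prob_finite_eq {S : Set α} (hS : S.Finite) : prob p S = ∑ a ∈ hS.toFinset, p a := by
  rw [prob_eq_indicator, tsum_eq_sum (s := hS.toFinset)
    (fun b hb => Set.indicator_of_notMem (fun hbS => hb (hS.mem_toFinset.2 hbS)) p)]
  exact Finset.sum_congr rfl (fun a ha => Set.indicator_of_mem (hS.mem_toFinset.1 ha) p)

lemma prob_le_card_mul (hp : ∀ a, 0 ≤ p a) {S : Set α} (hS : S.Finite) {C : ℝ}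
    (h : ∀ a ∈ S, p a ≤ C) : prob p S ≤ (S.ncard : ℝ) * C := by
  rw [prob_finite_eq hS]
  calc ∑ a ∈ hS.toFinset, p a ≤ hS.toFinset.card • C :=
        Finset.sum_le_card_nsmul _ _ _ (fun a ha => h a (hS.mem_toFinset.1 ha))
  _ = (S.ncard : ℝ) * C := by rw [Set.ncard_eq_toFinset_card S hS]; simp [nsmul_eq_mul]

lemma finite_of_gt (h1 : Summable p) {δ : ℝ} (hδ : 0 < δ) :
    {a | δ < p a}.Finite := by
  have h2 : ∀ᶠ a in Filter.cofinite, p a < δ :=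
    h1.tendsto_cofinite_zero.eventually_lt_const hδ
  exact (Filter.eventually_cofinite.1 h2).subset (fun a ha => not_lt.2 (le_of_lt ha))

lemma card_le_of_gt (hp : ∀ a, 0 ≤ p a) (h1 : HasSum p 1) {δ : ℝ} (hδ : 0 < δ) :
    ({a | δ < p a}.ncard : ℝ) * δ ≤ 1 := by
  have hfin := finite_of_gt h1.summable hδ
  have hb : ({a | δ < p a}.ncard : ℝ) * δ ≤ prob p {a | δ < p a} := by
    rw [prob_finite_eq hfin, Set.ncard_eq_toFinset_card _ hfin]
    have := Finset.card_nsmul_le_sum hfin.toFinset p δ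
      (fun a ha => le_of_lt (hfin.mem_toFinset.1 ha))
    simpa [nsmul_eq_mul] using this
  exact hb.trans (prob_le_one hp h1 _)

-- coding lemma
lemma code_exists {α : Type*} [Nonempty α] {S : Set α} (hS : S.Finite) :
    ∃ (φ : α → Fin (S.ncard + 1)) (ψ : Fin (S.ncard + 1) → α), ∀ ω ∈ S, ψ (φ ω) = ω := by
  classical
  have hcard : hS.toFinset.card = S.ncard := (Set.ncard_eq_toFinset_card S hS).symm
  let e : hS.toFinset ≃ Fin S.ncard := (hS.toFinset.equivFin).trans (finCongr hcard)
  refine ⟨fun ω => if h : ω ∈ hS.toFinset then (e ⟨ω, h⟩).castSucc else Fin.last _,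
    fun i => if h : (i : ℕ) < S.ncard then (e.symm ⟨i, h⟩ : α) else Classical.arbitrary α,
    fun ω hω => ?_⟩
  have hmem : ω ∈ hS.toFinset := hS.mem_toFinset.2 hω
  dsimp only
  rw [dif_pos hmem]
  have hlt : ((e ⟨ω, hmem⟩).castSucc : ℕ) < S.ncard := (e ⟨ω, hmem⟩).2
  rw [dif_pos hlt]
  have : (⟨((e ⟨ω, hmem⟩).castSucc : ℕ), hlt⟩ : Fin S.ncard) = e ⟨ω, hmem⟩ := by
    ext; simp
  rw [this, Equiv.symm_apply_apply]

end problem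

section single
variable {α : Type*} {p : α → ℝ}

lemma nonempty_of_hasSum_one (h1 : HasSum p 1) : Nonempty α := by
  by_contra h
  haveI : IsEmpty α := not_nonempty_iff.1 h
  have h0 : ∑' a, p a = 0 := by
    have : p = fun _ => 0 := funext (fun a => IsEmpty.elim ‹IsEmpty α› a)
    rw [this]; exact tsum_zero
  rw [h1.tsum_eq] at h0
  norm_num at h0

/-- Converse bound for a single block length. -/
lemma converse_single (hp : ∀ a, 0 ≤ p a) (h1 : HasSum p 1) {n : ℕ} (hn : 0 < n)
    (a : ℝ) {M : ℕ} (φ : α → Fin M) (ψ : Fin M → α) :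
    1 - prob p {ω | ψ (φ ω) ≠ ω} ≤
      prob p {ω | -(1 / (n : ℝ)) * Real.log (p ω) < a} + M * Real.exp (-(n:ℝ) * a) := by
  classical
  set D := {ω | ψ (φ ω) = ω} with hD
  set E := {ω | -(1 / (n : ℝ)) * Real.log (p ω) < a} with hE
  have hinj : Function.Injective (fun x : D => φ x) := by
    intro x y hxy
    simp only at hxy
    have hx := x.2; have hy := y.2
    simp only [hD, Set.mem_setOf_eq] at hx hy
    exact Subtype.ext (by rw [← hx, ← hy, hxy])
  haveI : Finite D := Finite.of_injective _ hinj
  have hDfin : D.Finite := Set.toFinite D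
  have hDcard : D.ncard ≤ M := by
    have := Nat.card_le_card_of_injective _ hinj
    simpa [Nat.card_coe_set_eq] using this
  have herr : prob p {ω | ψ (φ ω) ≠ ω} = 1 - prob p D := by
    have : {ω | ψ (φ ω) ≠ ω} = Dᶜ := by ext ω; simp [hD]
    rw [this, prob_compl hp h1]
  rw [herr]
  have hbound : ∀ ω ∈ D ∩ Eᶜ, p ω ≤ Real.exp (-(n:ℝ) * a) := by
    rintro ω ⟨-, hω⟩
    simp only [hE, Set.mem_compl_iff, Set.mem_setOf_eq, not_lt] at hω
    rcases eq_or_lt_of_le (hp ω) with h0 | h0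
    · rw [← h0]; exact (Real.exp_pos _).le
    · have hn' : (0:ℝ) < n := by exact_mod_cast hn
      have hlog : Real.log (p ω) ≤ -(n:ℝ) * a := by
        have hform : -(1 / (n:ℝ)) * Real.log (p ω) = (-Real.log (p ω)) / n := by
          field_simp
        rw [hform] at hω
        have := (le_div_iff₀ hn').1 hω
        linarith
      calc p ω = Real.exp (Real.log (p ω)) := (Real.exp_log h0).symm
      _ ≤ Real.exp (-(n:ℝ) * a) := Real.exp_le_exp.2 hlog
  have hsplit : prob p D ≤ prob p E + prob p (D ∩ Eᶜ) := by
    have hsub : D ⊆ E ∪ (D ∩ Eᶜ) := by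
      intro ω hω
      by_cases h : ω ∈ E
      · exact Or.inl h
      · exact Or.inr ⟨hω, h⟩
    exact (prob_mono hp h1.summable hsub).trans (prob_union_le hp h1.summable _ _)
  have h2 : prob p (D ∩ Eᶜ) ≤ (M:ℝ) * Real.exp (-(n:ℝ) * a) := by
    calc prob p (D ∩ Eᶜ) ≤ ((D ∩ Eᶜ).ncard : ℝ) * Real.exp (-(n:ℝ) * a) :=
          prob_le_card_mul hp (hDfin.subset Set.inter_subset_left) hbound
    _ ≤ (M:ℝ) * Real.exp (-(n:ℝ) * a) := by
        have hle : (D ∩ Eᶜ).ncard ≤ M :=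
          le_trans (Set.ncard_le_ncard Set.inter_subset_left hDfin) hDcard
        exact mul_le_mul_of_nonneg_right (by exact_mod_cast hle) (Real.exp_pos _).le
  linarith

/-- Achievability for a single block length. -/
lemma achieve_single (hp : ∀ a, 0 ≤ p a) (h1 : HasSum p 1) {b : ℝ} (hb : 0 < b)
    {n : ℕ} (hn : 0 < n) :
    ∃ (M : ℕ) (φ : α → Fin M) (ψ : Fin M → α), 0 < M ∧
      (M : ℝ) ≤ Real.exp ((n:ℝ) * b) + 1 ∧
      prob p {ω | ψ (φ ω) ≠ ω} ≤ 1 - prob p {ω | -(1 / (n : ℝ)) * Real.log (p ω) < b} := by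
  classical
  haveI : Nonempty α := nonempty_of_hasSum_one h1
  have hδ : (0:ℝ) < Real.exp (-(n:ℝ) * b) := Real.exp_pos _
  set A := {ω | Real.exp (-(n:ℝ) * b) < p ω} with hA
  have hAfin : A.Finite := finite_of_gt h1.summable hδ
  obtain ⟨φ, ψ, hcode⟩ := code_exists hAfin
  refine ⟨A.ncard + 1, φ, ψ, Nat.succ_pos _, ?_, ?_⟩
  · have hcard := card_le_of_gt hp h1 hδ
    have : (A.ncard : ℝ) ≤ Real.exp ((n:ℝ) * b) := by
      have hprod : Real.exp (-(n:ℝ) * b) * Real.exp ((n:ℝ) * b) = 1 := by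
        rw [← Real.exp_add]; ring_nf; exact Real.exp_zero
      have h2 := mul_le_mul_of_nonneg_right hcard (Real.exp_pos ((n:ℝ)*b)).le
      rw [one_mul, mul_assoc, hprod, mul_one] at h2
      exact h2
    push_cast
    linarith
  · have hsub : {ω | ψ (φ ω) ≠ ω} ⊆ Aᶜ := by
      intro ω hω
      simp only [Set.mem_setOf_eq] at hω
      intro hmem
      exact hω (hcode ω hmem)
    calc prob p {ω | ψ (φ ω) ≠ ω} ≤ prob p Aᶜ := prob_mono hp h1.summable hsub
    _ = 1 - prob p A := prob_compl hp h1 A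
    _ ≤ 1 - prob p {ω | -(1 / (n : ℝ)) * Real.log (p ω) < b} := by
        have hle : prob p {ω | -(1 / (n : ℝ)) * Real.log (p ω) < b} ≤ prob p A := by
          refine prob_le_of_ae hp h1.summable (fun ω hω => ?_)
          simp only [Set.mem_setOf_eq] at hω
          rcases eq_or_lt_of_le (hp ω) with h0 | h0
          · exact Or.inr h0.symm
          · left
            have hn' : (0:ℝ) < n := by exact_mod_cast hn
            have hlog : -(n:ℝ) * b < Real.log (p ω) := by
              have hform : -(1 / (n:ℝ)) * Real.log (p ω) = (-Real.log (p ω)) / n := by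
                field_simp
              rw [hform] at hω
              have := (div_lt_iff₀ hn').1 hω
              linarith
            simp only [hA, Set.mem_setOf_eq]
            calc Real.exp (-(n:ℝ) * b) < Real.exp (Real.log (p ω)) := Real.exp_lt_exp.2 hlog
            _ = p ω := Real.exp_log h0
        linarith

/-- A code covering any finite set. -/
lemma code_of_finite (hp : ∀ a, 0 ≤ p a) (h1 : HasSum p 1) {S : Set α} (hS : S.Finite) :
    ∃ (M : ℕ) (φ : α → Fin M) (ψ : Fin M → α), 0 < M ∧
      prob p {ω | ψ (φ ω) ≠ ω} ≤ 1 - prob p S := by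
  classical
  haveI : Nonempty α := nonempty_of_hasSum_one h1
  obtain ⟨φ, ψ, hcode⟩ := code_exists hS
  refine ⟨S.ncard + 1, φ, ψ, Nat.succ_pos _, ?_⟩
  have hsub : {ω | ψ (φ ω) ≠ ω} ⊆ Sᶜ := fun ω hω hmem => hω (hcode ω hmem)
  calc prob p {ω | ψ (φ ω) ≠ ω} ≤ prob p Sᶜ := prob_mono hp h1.summable hsub
  _ = 1 - prob p S := prob_compl hp h1 S

end single
noncomputable section

/-- The rate sequence tends to/below b. -/
lemma rate_limsup_le {M : ℕ → ℕ} {b : ℝ} (hb : 0 < b)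
    (hM : ∀ n : ℕ, 1 ≤ n → (M n : ℝ) ≤ Real.exp ((n:ℝ) * b) + 1) :
    Filter.limsup (fun n => ((Real.log (M n) / n : ℝ) : EReal)) atTop ≤ (b : EReal) := by
  have hrate : ∀ n : ℕ, 1 ≤ n → Real.log (M n) / n ≤ b + Real.log 2 / n := by
    intro n hn
    have hn' : (0:ℝ) < n := by exact_mod_cast hn
    have hexp1 : (1:ℝ) ≤ Real.exp ((n:ℝ) * b) := by
      rw [← Real.exp_zero]
      exact Real.exp_le_exp.2 (by positivity)
    have hlog : Real.log (M n) ≤ Real.log 2 + (n:ℝ) * b := by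
      rcases Nat.eq_zero_or_pos (M n) with h0 | h0
      · rw [h0]; simp only [Nat.cast_zero, Real.log_zero]; positivity
      · have h1 : (M n : ℝ) ≤ 2 * Real.exp ((n:ℝ) * b) := by
          have := hM n hn; linarith
        calc Real.log (M n) ≤ Real.log (2 * Real.exp ((n:ℝ)*b)) :=
              Real.log_le_log (by exact_mod_cast h0) h1
        _ = Real.log 2 + (n:ℝ)*b := by rw [Real.log_mul (by norm_num) (Real.exp_ne_zero _),
              Real.log_exp]
    rw [div_le_iff₀ hn']
    have : b + Real.log 2 / n = (Real.log 2 + n * b)/n := by field_simp; ring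
    rw [this, div_mul_cancel₀ _ (ne_of_gt hn')]
    exact hlog
  have hev : ∀ᶠ n in atTop, ((Real.log (M n) / n : ℝ) : EReal) ≤
      ((b + Real.log 2 / n : ℝ) : EReal) := by
    filter_upwards [eventually_ge_atTop 1] with n hn
    exact_mod_cast hrate n hn
  calc Filter.limsup (fun n => ((Real.log (M n) / n : ℝ) : EReal)) atTop
      ≤ Filter.limsup (fun n : ℕ => ((b + Real.log 2 / n : ℝ) : EReal)) atTop :=
        limsup_le_limsup hev
  _ = (b : EReal) := by
      refine Tendsto.limsup_eq ?_
      rw [EReal.tendsto_coe]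
      have : Filter.Tendsto (fun n : ℕ => Real.log 2 / n) atTop (nhds 0) :=
        Tendsto.div_atTop tendsto_const_nhds tendsto_natCast_atTop_atTop
      simpa using tendsto_const_nhds.add this

lemma rate_liminf_le {M : ℕ → ℕ} {b : ℝ} (hb : 0 < b)
    (hM : ∃ᶠ n in atTop, 1 ≤ n ∧ (M n : ℝ) ≤ Real.exp ((n:ℝ) * b) + 1) :
    Filter.liminf (fun n => ((Real.log (M n) / n : ℝ) : EReal)) atTop ≤ (b : EReal) := by
  refine le_of_forall_gt_imp_ge_of_dense (fun c hc => ?_)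
  obtain ⟨c', hc1, hc2⟩ := EReal.exists_between_coe_real hc
  have htend : Filter.Tendsto (fun n : ℕ => b + Real.log 2 / n) atTop (nhds b) := by
    have : Filter.Tendsto (fun n : ℕ => Real.log 2 / n) atTop (nhds 0) :=
      Tendsto.div_atTop tendsto_const_nhds tendsto_natCast_atTop_atTop
    simpa using tendsto_const_nhds.add this
  have hev : ∀ᶠ n : ℕ in atTop, b + Real.log 2 / n < c' := by
    have : b < c' := by exact_mod_cast hc1
    exact htend.eventually_lt_const this
  have hfreq : ∃ᶠ n in atTop, ((Real.log (M n) / n : ℝ) : EReal) ≤ (c' : EReal) := by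
    refine (hM.and_eventually hev).mono ?_
    rintro n ⟨⟨hn, hMn⟩, hltc⟩
    have hn' : (0:ℝ) < n := by exact_mod_cast hn
    have hexp1 : (1:ℝ) ≤ Real.exp ((n:ℝ) * b) := by
      rw [← Real.exp_zero]; exact Real.exp_le_exp.2 (by positivity)
    have hlog : Real.log (M n) ≤ Real.log 2 + (n:ℝ) * b := by
      rcases Nat.eq_zero_or_pos (M n) with h0 | h0
      · rw [h0]; simp only [Nat.cast_zero, Real.log_zero]; positivity
      · calc Real.log (M n) ≤ Real.log (2 * Real.exp ((n:ℝ)*b)) :=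
              Real.log_le_log (by exact_mod_cast h0) (by linarith)
        _ = Real.log 2 + (n:ℝ)*b := by rw [Real.log_mul (by norm_num) (Real.exp_ne_zero _),
              Real.log_exp]
    have : Real.log (M n) / n ≤ c' := by
      rw [div_le_iff₀ hn']
      have h3 : b + Real.log 2 / n = (Real.log 2 + n * b)/n := by field_simp; ring
      have h4 : Real.log 2 + (n:ℝ) * b ≤ c' * n := by
        rw [h3] at hltc
        have := (div_lt_iff₀ hn').1 hltc
        linarith
      linarith
    exact_mod_cast this
  exact (liminf_le_of_frequently_le' hfreq).trans hc2.le

lemma exp_small {d : ℝ} (hd : d < 0) {η : ℝ} (hη : 0 < η) :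
    ∀ᶠ n : ℕ in atTop, Real.exp ((n:ℝ) * d) < η := by
  have h : Filter.Tendsto (fun n : ℕ => Real.exp ((n:ℝ) * d)) atTop (nhds 0) :=
    Real.tendsto_exp_atBot.comp
      (Filter.Tendsto.atTop_mul_const_of_neg hd tendsto_natCast_atTop_atTop)
  exact h.eventually_lt_const hη

section single2
variable {α : Type*} {p : α → ℝ}

lemma converse_n (hp : ∀ a, 0 ≤ p a) (h1 : HasSum p 1) {n : ℕ} (hn : 1 ≤ n)
    {a b c : ℝ} {M : ℕ} (hM : 0 < M) (φ : α → Fin M) (ψ : Fin M → α)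
    (hrate : Real.log M / n < b) (herr : prob p {ω | ψ (φ ω) ≠ ω} < c) :
    1 - c - Real.exp ((n:ℝ) * (b - a)) < prob p {ω | -(1/(n:ℝ)) * Real.log (p ω) < a} := by
  have h0 := converse_single hp h1 (n := n) (by omega) a φ ψ
  have hn' : (0:ℝ) < n := by exact_mod_cast hn
  have hMle : (M:ℝ) ≤ Real.exp ((n:ℝ) * b) := by
    have hlog : Real.log M < (n:ℝ) * b := by
      have := (div_lt_iff₀ hn').1 hrate
      linarith
    have hM' : (M:ℝ) = Real.exp (Real.log M) :=
      (Real.exp_log (by exact_mod_cast hM)).symm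
    rw [hM']
    exact Real.exp_le_exp.2 hlog.le
  have hexp : Real.exp ((n:ℝ) * b) * Real.exp (-(n:ℝ) * a) = Real.exp ((n:ℝ) * (b - a)) := by
    rw [← Real.exp_add]; congr 1; ring
  have hMexp : (M:ℝ) * Real.exp (-(n:ℝ) * a) ≤ Real.exp ((n:ℝ) * (b - a)) :=
    (mul_le_mul_of_nonneg_right hMle (Real.exp_pos _).le).trans_eq hexp
  linarith

lemma exists_finite_prob_gt (h1 : HasSum p 1) {c : ℝ} (hc : c < 1) :
    ∃ S : Set α, S.Finite ∧ c < prob p S := by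
  have hev : ∀ᶠ s : Finset α in atTop, c < ∑ a ∈ s, p a :=
    h1.eventually (eventually_gt_nhds hc)
  obtain ⟨s, hs⟩ := hev.exists
  refine ⟨↑s, s.finite_toSet, ?_⟩
  rw [prob_finite_eq s.finite_toSet]
  have : s.finite_toSet.toFinset = s := by simp
  rw [this]; exact hs

lemma trivial_code (h1 : HasSum p 1) :
    ∃ (M : ℕ) (φ : α → Fin M) (ψ : Fin M → α), 0 < M := by
  haveI : Nonempty α := nonempty_of_hasSum_one h1
  exact ⟨1, fun _ => 0, fun _ => Classical.arbitrary α, one_pos⟩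

end single2

section seq
variable {Ω : ℕ → Type} {p : ∀ n, Ω n → ℝ}

lemma achieve_seq (hp : ∀ n ω, 0 ≤ p n ω) (hs : ∀ n, HasSum (p n) 1) {b : ℝ} (hb : 0 < b) :
    ∃ (M : ℕ → ℕ) (φ : ∀ n, Ω n → Fin (M n)) (ψ : ∀ n, Fin (M n) → Ω n),
      (∀ n, 0 < M n) ∧ ∀ n, 1 ≤ n →
        ((M n : ℝ) ≤ Real.exp ((n:ℝ) * b) + 1 ∧
         prob (p n) {ω | ψ n (φ n ω) ≠ ω} ≤
           1 - prob (p n) {ω | -(1 / (n : ℝ)) * Real.log (p n ω) < b}) := by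
  have h : ∀ n : ℕ, ∃ (M : ℕ) (φ : Ω n → Fin M) (ψ : Fin M → Ω n), 0 < M ∧
      (1 ≤ n → ((M : ℝ) ≤ Real.exp ((n:ℝ) * b) + 1 ∧
        prob (p n) {ω | ψ (φ ω) ≠ ω} ≤
          1 - prob (p n) {ω | -(1 / (n : ℝ)) * Real.log (p n ω) < b})) := by
    intro n
    rcases Nat.eq_zero_or_pos n with h0 | h0
    · obtain ⟨M, φ, ψ, hM⟩ := trivial_code (hs n)
      exact ⟨M, φ, ψ, hM, fun hn => absurd hn (by omega)⟩
    · obtain ⟨M, φ, ψ, hM, h1, h2⟩ := achieve_single (hp n) (hs n) hb h0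
      exact ⟨M, φ, ψ, hM, fun _ => ⟨h1, h2⟩⟩
  choose M φ ψ hM hrest using h
  exact ⟨M, φ, ψ, hM, hrest⟩

lemma achieve_seq3 (hp : ∀ n ω, 0 ≤ p n ω) (hs : ∀ n, HasSum (p n) 1) {b : ℝ} (hb : 0 < b)
    {c : ℝ} (hc : c < 1) :
    ∃ (M : ℕ → ℕ) (φ : ∀ n, Ω n → Fin (M n)) (ψ : ∀ n, Fin (M n) → Ω n),
      (∀ n, 0 < M n) ∧ ∀ n, 1 ≤ n →
        ((c < prob (p n) {ω | -(1 / (n : ℝ)) * Real.log (p n ω) < b} →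
            (M n : ℝ) ≤ Real.exp ((n:ℝ) * b) + 1) ∧
         prob (p n) {ω | ψ n (φ n ω) ≠ ω} ≤ 1 - c) := by
  classical
  have h : ∀ n : ℕ, ∃ (M : ℕ) (φ : Ω n → Fin M) (ψ : Fin M → Ω n), 0 < M ∧
      (1 ≤ n → ((c < prob (p n) {ω | -(1 / (n : ℝ)) * Real.log (p n ω) < b} →
          (M : ℝ) ≤ Real.exp ((n:ℝ) * b) + 1) ∧
        prob (p n) {ω | ψ (φ ω) ≠ ω} ≤ 1 - c)) := by
    intro n
    rcases Nat.eq_zero_or_pos n with h0 | h0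
    · obtain ⟨M, φ, ψ, hM⟩ := trivial_code (hs n)
      exact ⟨M, φ, ψ, hM, fun hn => absurd hn (by omega)⟩
    · by_cases hG : c < prob (p n) {ω | -(1 / (n : ℝ)) * Real.log (p n ω) < b}
      · obtain ⟨M, φ, ψ, hM, h1, h2⟩ := achieve_single (hp n) (hs n) hb h0
        exact ⟨M, φ, ψ, hM, fun _ => ⟨fun _ => h1, by linarith⟩⟩
      · obtain ⟨S, hSfin, hSc⟩ := exists_finite_prob_gt (hs n) hc
        obtain ⟨M, φ, ψ, hM, h2⟩ := code_of_finite (hp n) (hs n) hSfin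
        exact ⟨M, φ, ψ, hM, fun _ => ⟨fun hcon => absurd hcon hG, by linarith⟩⟩
  choose M φ ψ hM hrest using h
  exact ⟨M, φ, ψ, hM, hrest⟩

lemma F0_empty (hp : ∀ n ω, 0 ≤ p n ω) (hs : ∀ n, HasSum (p n) 1) :
    (fun n => prob (p n) {ω | -(1 / (n : ℝ)) * Real.log (p n ω) < (0:ℝ)}) =
      fun _ => (0:ℝ) := by
  funext n
  have hempty : {ω | -(1 / (n : ℝ)) * Real.log (p n ω) < (0:ℝ)} = (∅ : Set (Ω n)) := by
    refine Set.eq_empty_iff_forall_notMem.2 (fun ω hω => ?_)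
    simp only [Set.mem_setOf_eq] at hω
    have h1 : Real.log (p n ω) ≤ 0 :=
      Real.log_nonpos (hp n ω) (le_hasSum (hs n) ω (fun b _ => hp n b))
    have h2 : (0:ℝ) ≤ 1 / (n:ℝ) := by positivity
    nlinarith
  rw [hempty]
  exact prob_zero (fun a ha => absurd ha (Set.notMem_empty a))

end seq

/-- For every general source and every `0 ≤ ε < 1`,
`R₊(1-ε|p̄) = H̄₊(ε|p̄)`, and `R₊†(1-ε|p̄) = R₊‡(1-ε|p̄) = H̲₊(ε|p̄)`. -/
theorem fixed_length_plus_rates_eq_spectral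
    (Ω : ℕ → Type) [∀ n, Countable (Ω n)]
    (p : ∀ n, Ω n → ℝ)
    (hnonneg : ∀ n ω, 0 ≤ p n ω)
    (hsum : ∀ n, HasSum (p n) 1)
    (ε : ℝ) (hε0 : 0 ≤ ε) (hε1 : ε < 1) :
    (sInf { r : EReal |
      ∃ (M : ℕ → ℕ) (φ : ∀ n, Ω n → Fin (M n)) (ψ : ∀ n, Fin (M n) → Ω n),
        (∀ n, 0 < M n) ∧
        Filter.limsup (fun n => prob (p n) {ω | ψ n (φ n ω) ≠ ω}) atTop < 1 - ε ∧
        r = Filter.limsup (fun n => ((Real.log (M n) / n : ℝ) : EReal)) atTop }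
      = sSup { x : EReal | ∃ a : ℝ, x = (a : EReal) ∧
          Filter.liminf
            (fun n => prob (p n) {ω | -(1 / (n : ℝ)) * Real.log (p n ω) < a}) atTop ≤ ε })
    ∧
    (sInf { r : EReal |
      ∃ (M : ℕ → ℕ) (φ : ∀ n, Ω n → Fin (M n)) (ψ : ∀ n, Fin (M n) → Ω n),
        (∀ n, 0 < M n) ∧
        Filter.liminf (fun n => prob (p n) {ω | ψ n (φ n ω) ≠ ω}) atTop < 1 - ε ∧
        r = Filter.limsup (fun n => ((Real.log (M n) / n : ℝ) : EReal)) atTop }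
      = sSup { x : EReal | ∃ a : ℝ, x = (a : EReal) ∧
          Filter.limsup
            (fun n => prob (p n) {ω | -(1 / (n : ℝ)) * Real.log (p n ω) < a}) atTop ≤ ε })
    ∧
    (sInf { r : EReal |
      ∃ (M : ℕ → ℕ) (φ : ∀ n, Ω n → Fin (M n)) (ψ : ∀ n, Fin (M n) → Ω n),
        (∀ n, 0 < M n) ∧
        Filter.limsup (fun n => prob (p n) {ω | ψ n (φ n ω) ≠ ω}) atTop < 1 - ε ∧
        r = Filter.liminf (fun n => ((Real.log (M n) / n : ℝ) : EReal)) atTop }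
      = sSup { x : EReal | ∃ a : ℝ, x = (a : EReal) ∧
          Filter.limsup
            (fun n => prob (p n) {ω | -(1 / (n : ℝ)) * Real.log (p n ω) < a}) atTop ≤ ε }) := by

  classical
  refine ⟨?_, ?_, ?_⟩
  · -- Part 1
    apply le_antisymm
    · -- sInf ≤ sSup
      refine le_of_forall_gt_imp_ge_of_dense (fun c hc => ?_)
      obtain ⟨b, hb1, hb2⟩ := EReal.exists_between_coe_real hc
      have hT0 : ((0:ℝ) : EReal) ≤ sSup { x : EReal | ∃ a : ℝ, x = (a : EReal) ∧
          Filter.liminf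
            (fun n => prob (p n) {ω | -(1 / (n : ℝ)) * Real.log (p n ω) < a}) atTop ≤ ε } := by
        apply le_sSup
        simp only [Set.mem_setOf_eq]
        refine ⟨0, rfl, ?_⟩
        rw [F0_empty hnonneg hsum, liminf_const]
        exact hε0
      have hbpos : (0:ℝ) < b := by exact_mod_cast hT0.trans_lt hb1
      have hliminf : ε < Filter.liminf
          (fun n => prob (p n) {ω | -(1 / (n : ℝ)) * Real.log (p n ω) < b}) atTop := by
        by_contra h
        exact hb1.not_ge (le_sSup ⟨b, rfl, not_lt.1 h⟩)
      obtain ⟨c', hc'1, hc'2⟩ := exists_between hliminf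
      obtain ⟨M, φ, ψ, hM, hach⟩ := achieve_seq hnonneg hsum hbpos
      have herr : Filter.limsup (fun n => prob (p n) {ω | ψ n (φ n ω) ≠ ω}) atTop < 1 - ε := by
        have hevF : ∀ᶠ n in atTop, c' <
            prob (p n) {ω | -(1 / (n : ℝ)) * Real.log (p n ω) < b} :=
          eventually_lt_of_lt_liminf hc'2
            (isBoundedUnder_of ⟨0, fun n => prob_nonneg (hnonneg n) _⟩)
        have hev : ∀ᶠ n in atTop, prob (p n) {ω | ψ n (φ n ω) ≠ ω} ≤ 1 - c' := by
          filter_upwards [hevF, eventually_ge_atTop 1] with n h1n h2n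
          have := (hach n h2n).2
          linarith
        have hcob : IsCoboundedUnder (· ≤ ·) atTop
            (fun n => prob (p n) {ω | ψ n (φ n ω) ≠ ω}) :=
          isCoboundedUnder_le_of_le atTop (fun n => prob_nonneg (hnonneg n) _)
        calc Filter.limsup (fun n => prob (p n) {ω | ψ n (φ n ω) ≠ ω}) atTop
            ≤ 1 - c' := limsup_le_of_le hcob hev
        _ < 1 - ε := by linarith
      refine le_trans (sInf_le ⟨M, φ, ψ, hM, herr, rfl⟩) ?_
      calc Filter.limsup (fun n => ((Real.log (M n) / n : ℝ) : EReal)) atTop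
          ≤ (b : EReal) := rate_limsup_le hbpos (fun n hn => (hach n hn).1)
      _ ≤ c := hb2.le
    · -- sSup ≤ sInf
      refine le_sInf (fun r hr => sSup_le (fun x hx => ?_))
      obtain ⟨a, rfl, hFa⟩ := hx
      obtain ⟨M, φ, ψ, hM, herr, rfl⟩ := hr
      by_contra hcon
      obtain ⟨b, hrb, hba⟩ := EReal.exists_between_coe_real (not_le.1 hcon)
      have hba' : b < a := by exact_mod_cast hba
      have hevrate : ∀ᶠ n in atTop, Real.log (M n) / n < b := by
        filter_upwards [eventually_lt_of_limsup_lt hrb] with n hn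
        exact_mod_cast hn
      set L := Filter.limsup (fun n => prob (p n) {ω | ψ n (φ n ω) ≠ ω}) atTop with hL
      set c := (L + (1 - ε))/2 with hcdef
      have hbe : IsBoundedUnder (· ≤ ·) atTop
          (fun n => prob (p n) {ω | ψ n (φ n ω) ≠ ω}) :=
        isBoundedUnder_of ⟨1, fun n => prob_le_one (hnonneg n) (hsum n) _⟩
      have hc1 : L < c := by rw [hcdef]; linarith
      have hc2 : c < 1 - ε := by rw [hcdef]; linarith
      have heverr : ∀ᶠ n in atTop, prob (p n) {ω | ψ n (φ n ω) ≠ ω} < c :=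
        eventually_lt_of_limsup_lt hc1 hbe
      set ε' := (ε + (1 - c))/2 with hε'def
      have hε'1 : ε < ε' := by rw [hε'def]; linarith
      have hε'2 : ε' < 1 - c := by rw [hε'def]; linarith
      have hevexp : ∀ᶠ n : ℕ in atTop, Real.exp ((n:ℝ) * (b - a)) < (1 - c) - ε' :=
        exp_small (by linarith) (by linarith)
      have hevF : ∀ᶠ n in atTop, ε' ≤
          prob (p n) {ω | -(1 / (n : ℝ)) * Real.log (p n ω) < a} := by
        filter_upwards [hevrate, heverr, hevexp, eventually_ge_atTop 1] with n h1 h2 h3 h4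
        have := converse_n (a := a) (hnonneg n) (hsum n) h4 (hM n) (φ n) (ψ n) h1 h2
        linarith
      have hfin : ε' ≤ Filter.liminf
          (fun n => prob (p n) {ω | -(1 / (n : ℝ)) * Real.log (p n ω) < a}) atTop :=
        le_liminf_of_le
          (isCoboundedUnder_ge_of_le atTop (fun n => prob_le_one (hnonneg n) (hsum n) _)) hevF
      linarith [hfin.trans hFa]
  · -- Part 2
    apply le_antisymm
    · refine le_of_forall_gt_imp_ge_of_dense (fun c hc => ?_)
      obtain ⟨b, hb1, hb2⟩ := EReal.exists_between_coe_real hc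
      have hT0 : ((0:ℝ) : EReal) ≤ sSup { x : EReal | ∃ a : ℝ, x = (a : EReal) ∧
          Filter.limsup
            (fun n => prob (p n) {ω | -(1 / (n : ℝ)) * Real.log (p n ω) < a}) atTop ≤ ε } := by
        apply le_sSup
        refine ⟨0, rfl, ?_⟩
        rw [F0_empty hnonneg hsum, limsup_const]
        exact hε0
      have hbpos : (0:ℝ) < b := by exact_mod_cast hT0.trans_lt hb1
      have hlimsup : ε < Filter.limsup
          (fun n => prob (p n) {ω | -(1 / (n : ℝ)) * Real.log (p n ω) < b}) atTop := by
        by_contra h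
        exact hb1.not_ge (le_sSup ⟨b, rfl, not_lt.1 h⟩)
      obtain ⟨c', hc'1, hc'2⟩ := exists_between hlimsup
      obtain ⟨M, φ, ψ, hM, hach⟩ := achieve_seq hnonneg hsum hbpos
      have herr : Filter.liminf (fun n => prob (p n) {ω | ψ n (φ n ω) ≠ ω}) atTop < 1 - ε := by
        have hfreqF : ∃ᶠ n in atTop, c' <
            prob (p n) {ω | -(1 / (n : ℝ)) * Real.log (p n ω) < b} :=
          frequently_lt_of_lt_limsup
            (isCoboundedUnder_le_of_le atTop (fun n => prob_nonneg (hnonneg n) _)) hc'2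
        have hfreq : ∃ᶠ n in atTop, prob (p n) {ω | ψ n (φ n ω) ≠ ω} ≤ 1 - c' := by
          refine (hfreqF.and_eventually (eventually_ge_atTop 1)).mono ?_
          rintro n ⟨h1n, h2n⟩
          have := (hach n h2n).2
          linarith
        calc Filter.liminf (fun n => prob (p n) {ω | ψ n (φ n ω) ≠ ω}) atTop
            ≤ 1 - c' := liminf_le_of_frequently_le hfreq
              (isBoundedUnder_of ⟨0, fun n => prob_nonneg (hnonneg n) _⟩)
        _ < 1 - ε := by linarith
      refine le_trans (sInf_le ⟨M, φ, ψ, hM, herr, rfl⟩) ?_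
      calc Filter.limsup (fun n => ((Real.log (M n) / n : ℝ) : EReal)) atTop
          ≤ (b : EReal) := rate_limsup_le hbpos (fun n hn => (hach n hn).1)
      _ ≤ c := hb2.le
    · refine le_sInf (fun r hr => sSup_le (fun x hx => ?_))
      obtain ⟨a, rfl, hFa⟩ := hx
      obtain ⟨M, φ, ψ, hM, herr, rfl⟩ := hr
      by_contra hcon
      obtain ⟨b, hrb, hba⟩ := EReal.exists_between_coe_real (not_le.1 hcon)
      have hba' : b < a := by exact_mod_cast hba
      have hevrate : ∀ᶠ n in atTop, Real.log (M n) / n < b := by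
        filter_upwards [eventually_lt_of_limsup_lt hrb] with n hn
        exact_mod_cast hn
      set L := Filter.liminf (fun n => prob (p n) {ω | ψ n (φ n ω) ≠ ω}) atTop with hL
      set c := (L + (1 - ε))/2 with hcdef
      have hc1 : L < c := by rw [hcdef]; linarith
      have hc2 : c < 1 - ε := by rw [hcdef]; linarith
      have hfreqerr : ∃ᶠ n in atTop, prob (p n) {ω | ψ n (φ n ω) ≠ ω} < c :=
        frequently_lt_of_liminf_lt
          (isCoboundedUnder_ge_of_le atTop (fun n => prob_le_one (hnonneg n) (hsum n) _)) hc1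
      set ε' := (ε + (1 - c))/2 with hε'def
      have hε'1 : ε < ε' := by rw [hε'def]; linarith
      have hε'2 : ε' < 1 - c := by rw [hε'def]; linarith
      have hevexp : ∀ᶠ n : ℕ in atTop, Real.exp ((n:ℝ) * (b - a)) < (1 - c) - ε' :=
        exp_small (by linarith) (by linarith)
      have hfreqF : ∃ᶠ n in atTop, ε' ≤
          prob (p n) {ω | -(1 / (n : ℝ)) * Real.log (p n ω) < a} := by
        refine (hfreqerr.and_eventually
          (hevrate.and (hevexp.and (eventually_ge_atTop 1)))).mono ?_
        rintro n ⟨h2, h1, h3, h4⟩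
        have := converse_n (a := a) (hnonneg n) (hsum n) h4 (hM n) (φ n) (ψ n) h1 h2
        linarith
      have hfin : ε' ≤ Filter.limsup
          (fun n => prob (p n) {ω | -(1 / (n : ℝ)) * Real.log (p n ω) < a}) atTop :=
        le_limsup_of_frequently_le hfreqF
          (isBoundedUnder_of ⟨1, fun n => prob_le_one (hnonneg n) (hsum n) _⟩)
      linarith [hfin.trans hFa]
  · -- Part 3
    apply le_antisymm
    · refine le_of_forall_gt_imp_ge_of_dense (fun c hc => ?_)
      obtain ⟨b, hb1, hb2⟩ := EReal.exists_between_coe_real hc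
      have hT0 : ((0:ℝ) : EReal) ≤ sSup { x : EReal | ∃ a : ℝ, x = (a : EReal) ∧
          Filter.limsup
            (fun n => prob (p n) {ω | -(1 / (n : ℝ)) * Real.log (p n ω) < a}) atTop ≤ ε } := by
        apply le_sSup
        refine ⟨0, rfl, ?_⟩
        rw [F0_empty hnonneg hsum, limsup_const]
        exact hε0
      have hbpos : (0:ℝ) < b := by exact_mod_cast hT0.trans_lt hb1
      have hlimsup : ε < Filter.limsup
          (fun n => prob (p n) {ω | -(1 / (n : ℝ)) * Real.log (p n ω) < b}) atTop := by
        by_contra h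
        exact hb1.not_ge (le_sSup ⟨b, rfl, not_lt.1 h⟩)
      obtain ⟨c', hc'1, hc'2⟩ := exists_between hlimsup
      have hc'lt1 : c' < 1 := by
        have h1 : Filter.limsup
            (fun n => prob (p n) {ω | -(1 / (n : ℝ)) * Real.log (p n ω) < b}) atTop ≤ 1 :=
          limsup_le_of_le
            (isCoboundedUnder_le_of_le atTop (fun n => prob_nonneg (hnonneg n) _))
            (Eventually.of_forall (fun n => prob_le_one (hnonneg n) (hsum n) _))
        linarith
      obtain ⟨M, φ, ψ, hM, hach⟩ := achieve_seq3 hnonneg hsum hbpos hc'lt1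
      have herr : Filter.limsup (fun n => prob (p n) {ω | ψ n (φ n ω) ≠ ω}) atTop < 1 - ε := by
        have hev : ∀ᶠ n in atTop, prob (p n) {ω | ψ n (φ n ω) ≠ ω} ≤ 1 - c' := by
          filter_upwards [eventually_ge_atTop 1] with n hn
          exact (hach n hn).2
        calc Filter.limsup (fun n => prob (p n) {ω | ψ n (φ n ω) ≠ ω}) atTop
            ≤ 1 - c' := limsup_le_of_le
              (isCoboundedUnder_le_of_le atTop (fun n => prob_nonneg (hnonneg n) _)) hev
        _ < 1 - ε := by linarith
      refine le_trans (sInf_le ⟨M, φ, ψ, hM, herr, rfl⟩) ?_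
      have hfreqF : ∃ᶠ n in atTop, c' <
          prob (p n) {ω | -(1 / (n : ℝ)) * Real.log (p n ω) < b} :=
        frequently_lt_of_lt_limsup
          (isCoboundedUnder_le_of_le atTop (fun n => prob_nonneg (hnonneg n) _)) hc'2
      have hfreqM : ∃ᶠ n in atTop, 1 ≤ n ∧ (M n : ℝ) ≤ Real.exp ((n:ℝ) * b) + 1 := by
        refine (hfreqF.and_eventually (eventually_ge_atTop 1)).mono ?_
        rintro n ⟨hF, hn⟩
        exact ⟨hn, (hach n hn).1 hF⟩
      calc Filter.liminf (fun n => ((Real.log (M n) / n : ℝ) : EReal)) atTop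
          ≤ (b : EReal) := rate_liminf_le hbpos hfreqM
      _ ≤ c := hb2.le
    · refine le_sInf (fun r hr => sSup_le (fun x hx => ?_))
      obtain ⟨a, rfl, hFa⟩ := hx
      obtain ⟨M, φ, ψ, hM, herr, rfl⟩ := hr
      by_contra hcon
      obtain ⟨b, hrb, hba⟩ := EReal.exists_between_coe_real (not_le.1 hcon)
      have hba' : b < a := by exact_mod_cast hba
      have hfreqrate : ∃ᶠ n in atTop, Real.log (M n) / n < b := by
        have h := frequently_lt_of_liminf_lt (u := fun n => ((Real.log (M n) / n : ℝ) : EReal))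
          (b := (b : EReal)) (by isBoundedDefault) hrb
        refine h.mono (fun n hn => ?_)
        exact_mod_cast hn
      set L := Filter.limsup (fun n => prob (p n) {ω | ψ n (φ n ω) ≠ ω}) atTop with hL
      set c := (L + (1 - ε))/2 with hcdef
      have hbe : IsBoundedUnder (· ≤ ·) atTop
          (fun n => prob (p n) {ω | ψ n (φ n ω) ≠ ω}) :=
        isBoundedUnder_of ⟨1, fun n => prob_le_one (hnonneg n) (hsum n) _⟩
      have hc1 : L < c := by rw [hcdef]; linarith
      have hc2 : c < 1 - ε := by rw [hcdef]; linarith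
      have heverr : ∀ᶠ n in atTop, prob (p n) {ω | ψ n (φ n ω) ≠ ω} < c :=
        eventually_lt_of_limsup_lt hc1 hbe
      set ε' := (ε + (1 - c))/2 with hε'def
      have hε'1 : ε < ε' := by rw [hε'def]; linarith
      have hε'2 : ε' < 1 - c := by rw [hε'def]; linarith
      have hevexp : ∀ᶠ n : ℕ in atTop, Real.exp ((n:ℝ) * (b - a)) < (1 - c) - ε' :=
        exp_small (by linarith) (by linarith)
      have hfreqF : ∃ᶠ n in atTop, ε' ≤
          prob (p n) {ω | -(1 / (n : ℝ)) * Real.log (p n ω) < a} := by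
        refine (hfreqrate.and_eventually
          (heverr.and (hevexp.and (eventually_ge_atTop 1)))).mono ?_
        rintro n ⟨h1, h2, h3, h4⟩
        have := converse_n (a := a) (hnonneg n) (hsum n) h4 (hM n) (φ n) (ψ n) h1 h2
        linarith
      have hfin : ε' ≤ Filter.limsup
          (fun n => prob (p n) {ω | -(1 / (n : ℝ)) * Real.log (p n ω) < a}) atTop :=
        le_limsup_of_frequently_le hfreqF
          (isBoundedUnder_of ⟨1, fun n => prob_le_one (hnonneg n) (hsum n) _⟩)
      linarith [hfin.trans hFa]
end
end
end

section
/- Let p be a probability mass function on a countable set Ω, let (M, φ, ψ) be a code for p (M a positive integer, φ : Ω → {1,…,M}, ψ : {1,…,M} → Ω), and let Ψ = (M, φ) be the induced operation. Define δ(p) := inf over nonempty finite subsets S ⊆ Ω of d(p, u_S), where u_S is the uniform distribution on S viewed as a distribution on Ω. Then p{ω : ψ(φ(ω)) ≠ ω} + d(p∘φ⁻¹, u_{M}) ≥ δ(p). -/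
open Filter

noncomputable section

/-- Half the variational distance between two distributions on a countable set. -/
def dVar {Ω : Type*} (p q : Ω → ℝ) : ℝ := (1 / 2) * ∑' ω, |p ω - q ω|

/-- The uniform distribution on a finite subset `S` of `Ω`, viewed as a
distribution on all of `Ω`. -/
def unifOn {Ω : Type*} [DecidableEq Ω] (S : Finset Ω) : Ω → ℝ :=
  fun ω => if ω ∈ S then 1 / (S.card : ℝ) else 0

/-- Push-forward of `p` under `φ : Ω → Fin M`. -/
def push {Ω : Type*} {M : ℕ} (p : Ω → ℝ) (φ : Ω → Fin M) : Fin M → ℝ :=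
  fun i => prob p {ω | φ ω = i}

/-- The uniform distribution on `Fin M`. -/
def unif (M : ℕ) : Fin M → ℝ := fun _ => 1 / (M : ℝ)

/-- Half the variational distance between two distributions on `Fin M`. -/
def tvHalf {M : ℕ} (q r : Fin M → ℝ) : ℝ := (1 / 2) * ∑ i, |q i - r i|

lemma posPart_formula (x : ℝ) : max x 0 = (|x| + x) / 2 := by
  rcases le_or_gt x 0 with h | h
  · rw [max_eq_right h, abs_of_nonpos h]; ring
  · rw [max_eq_left h.le, abs_of_pos h]; ring

lemma tsum_posPart_eq {Ω : Type*} (f : Ω → ℝ) (hf : Summable f) (h0 : ∑' ω, f ω = 0) :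
    (1 / 2) * ∑' ω, |f ω| = ∑' ω, max (f ω) 0 := by
  have habs : Summable (fun ω => |f ω|) := hf.abs
  rw [tsum_congr (fun ω => posPart_formula (f ω)), tsum_div_const,
    Summable.tsum_add habs hf, h0]
  ring

lemma sum_posPart_eq {ι : Type*} [Fintype ι] (f : ι → ℝ) (h0 : ∑ i, f i = 0) :
    (1 / 2) * ∑ i, |f i| = ∑ i, max (f i) 0 := by
  rw [Finset.sum_congr rfl (fun i _ => posPart_formula (f i)), ← Finset.sum_div,
    Finset.sum_add_distrib, h0]
  ring

/-- the sum of the decoding error of a code and the distance of the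
induced operation's output from uniform is at least the distance `δ(p)` of the
source from the closest uniform distribution. -/
theorem code_error_plus_uniformity_error_ge_delta
    (Ω : Type) [Countable Ω] [DecidableEq Ω]
    (p : Ω → ℝ)
    (hnonneg : ∀ ω, 0 ≤ p ω)
    (hsum : HasSum p 1)
    (M : ℕ) (hM : 0 < M)
    (φ : Ω → Fin M) (ψ : Fin M → Ω) :
    prob p {ω | ψ (φ ω) ≠ ω} + tvHalf (push p φ) (unif M)
      ≥ sInf { x : ℝ | ∃ S : Finset Ω, S.Nonempty ∧ x = dVar p (unifOn S) } := by
  classical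
  have hp : Summable p := hsum.summable
  set S : Finset Ω := Finset.image ψ Finset.univ with hSdef
  have hSne : S.Nonempty := ⟨ψ ⟨0, hM⟩, Finset.mem_image.mpr ⟨⟨0, hM⟩, Finset.mem_univ _, rfl⟩⟩
  have hn : 0 < S.card := Finset.card_pos.mpr hSne
  have hnR : (0 : ℝ) < (S.card : ℝ) := by exact_mod_cast hn
  have hnM : S.card ≤ M := by
    calc S.card ≤ (Finset.univ : Finset (Fin M)).card := Finset.card_image_le
    _ = M := by simp
  -- the uniform distribution on S
  have hu0 : ∀ ω ∉ S, unifOn S ω = 0 := fun ω h => if_neg h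
  have hu : Summable (unifOn S) := summable_of_ne_finset_zero hu0
  have huSum : ∑' ω, unifOn S ω = 1 := by
    rw [tsum_eq_sum hu0]
    have hval : ∀ ω ∈ S, unifOn S ω = 1 / (S.card : ℝ) := fun ω hω => if_pos hω
    rw [Finset.sum_congr rfl hval, Finset.sum_const, nsmul_eq_mul]
    field_simp
  -- the difference function and its positive part
  set f : Ω → ℝ := fun ω => p ω - unifOn S ω with hfdef
  have hfs : Summable f := hp.sub hu
  have hf0 : ∑' ω, f ω = 0 := by
    rw [Summable.tsum_sub hp hu, hsum.tsum_eq, huSum]; ring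
  set g : Ω → ℝ := fun ω => max (f ω) 0 with hgdef
  have hgs : Summable g := by
    have : g = fun ω => (|f ω| + f ω) / 2 := funext fun ω => posPart_formula (f ω)
    rw [this]
    exact (hfs.abs.add hfs).div_const 2
  have hdvar : dVar p (unifOn S) = ∑' ω, g ω := tsum_posPart_eq f hfs hf0
  -- the decoding set A
  set A : Finset Ω := S.filter (fun ω => ψ (φ ω) = ω) with hAdef
  have hA_iff : ∀ ω, ω ∈ A ↔ ψ (φ ω) = ω := by
    intro ω
    constructor
    · intro h; exact (Finset.mem_filter.mp h).2
    · intro h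
      refine Finset.mem_filter.mpr ⟨?_, h⟩
      exact Finset.mem_image.mpr ⟨φ ω, Finset.mem_univ _, h⟩
  have hAc : ((A : Set Ω))ᶜ = {ω | ψ (φ ω) ≠ ω} := by
    ext ω
    simp [hA_iff ω]
  -- push sums to 1
  have hpushsum : ∑ i, push p φ i = 1 := by
    have h1 : HasSum (fun i : Fin M => ∑' ω : φ ⁻¹' {i}, p ω) 1 := hsum.tsum_fiberwise φ
    have h2 : HasSum (push p φ) (∑ i, push p φ i) := hasSum_fintype _
    have h3 : (fun i : Fin M => ∑' ω : φ ⁻¹' {i}, p ω) = push p φ := by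
      funext i; rfl
    rw [h3] at h1
    exact h2.unique h1
  have hpush_nonneg : ∀ i, 0 ≤ push p φ i :=
    fun i => tsum_nonneg (fun ω => hnonneg ω)
  -- tvHalf as sum of positive parts
  set G : Fin M → ℝ := fun i => max (push p φ i - unif M i) 0 with hGdef
  have hGnn : ∀ i, 0 ≤ G i := fun i => le_max_right _ _
  have htv : tvHalf (push p φ) (unif M) = ∑ i, G i := by
    apply sum_posPart_eq
    rw [Finset.sum_sub_distrib, hpushsum]
    simp only [unif, Finset.sum_const, Finset.card_univ, Fintype.card_fin, nsmul_eq_mul]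
    field_simp
    norm_num
  -- per-point bound on A
  have hpt : ∀ ω ∈ A, g ω ≤ G (φ ω) := by
    intro ω hω
    have hωS : ω ∈ S := (Finset.mem_filter.mp hω).1
    have hple : p ω ≤ push p φ (φ ω) := by
      have hsub : Summable (fun x : {ω' | φ ω' = φ ω} => p x) := hp.subtype _
      have := Summable.le_tsum hsub ⟨ω, rfl⟩ (fun j _ => hnonneg j)
      exact this
    have hinv : unif M (φ ω) ≤ unifOn S ω := by
      rw [unifOn, if_pos hωS]
      unfold unif
      apply one_div_le_one_div_of_le hnR
      exact_mod_cast hnM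
    have : f ω ≤ push p φ (φ ω) - unif M (φ ω) := by
      simp only [hfdef]
      linarith
    exact max_le_max this le_rfl
  -- φ is injective on A
  have hinj : ∀ x ∈ A, ∀ y ∈ A, φ x = φ y → x = y := by
    intro x hx y hy hxy
    have hx' := (hA_iff x).mp hx
    have hy' := (hA_iff y).mp hy
    rw [← hx', ← hy', hxy]
  -- sum over A bound
  have hAbound : ∑ ω ∈ A, g ω ≤ tvHalf (push p φ) (unif M) := by
    calc ∑ ω ∈ A, g ω ≤ ∑ ω ∈ A, G (φ ω) := Finset.sum_le_sum hpt
      _ = ∑ i ∈ A.image φ, G i := (Finset.sum_image hinj).symm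
      _ ≤ ∑ i, G i := Finset.sum_le_sum_of_subset_of_nonneg
          (Finset.subset_univ _) (fun i _ _ => hGnn i)
      _ = tvHalf (push p φ) (unif M) := htv.symm
  -- tsum bound: split along A
  set h : Ω → ℝ :=
    fun ω => Set.indicator (↑A) g ω + Set.indicator ((↑A : Set Ω))ᶜ p ω with hhdef
  have hhs : Summable h := by
    apply Summable.add
    · exact hgs.indicator _
    · exact hp.indicator _
  have hunn : ∀ ω, 0 ≤ unifOn S ω := by
    intro ω
    unfold unifOn
    split
    · positivity
    · exact le_rfl
  have hgh : ∀ ω, g ω ≤ h ω := by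
    intro ω
    by_cases hω : ω ∈ (A : Set Ω)
    · have h1 : Set.indicator (↑A) g ω = g ω := Set.indicator_of_mem hω _
      have h2 : (0:ℝ) ≤ Set.indicator ((↑A : Set Ω))ᶜ p ω :=
        Set.indicator_nonneg (fun ω _ => hnonneg ω) ω
      simp only [hhdef, h1]
      linarith
    · have h1 : Set.indicator (↑A) g ω = 0 := Set.indicator_of_notMem hω _
      have h2 : Set.indicator ((↑A : Set Ω))ᶜ p ω = p ω :=
        Set.indicator_of_mem (by simpa using hω) _
      simp only [hhdef, h1, h2, zero_add]
      have hfp : f ω ≤ p ω := by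
        have := hunn ω
        simp only [hfdef]
        linarith
      exact max_le hfp (hnonneg ω)
  have hth : ∑' ω, h ω = ∑ ω ∈ A, g ω + prob p {ω | ψ (φ ω) ≠ ω} := by
    rw [hhdef, Summable.tsum_add (hgs.indicator _) (hp.indicator _)]
    congr 1
    · rw [← tsum_subtype]
      exact Finset.tsum_subtype' A g
    · rw [← tsum_subtype, prob, hAc]
  have hmain : dVar p (unifOn S) ≤ prob p {ω | ψ (φ ω) ≠ ω} + tvHalf (push p φ) (unif M) := by
    rw [hdvar]
    calc ∑' ω, g ω ≤ ∑' ω, h ω := Summable.tsum_le_tsum hgh hgs hhs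
      _ = ∑ ω ∈ A, g ω + prob p {ω | ψ (φ ω) ≠ ω} := hth
      _ ≤ tvHalf (push p φ) (unif M) + prob p {ω | ψ (φ ω) ≠ ω} :=
          add_le_add_left hAbound _
      _ = _ := add_comm _ _
  -- conclude via sInf
  have hmem : dVar p (unifOn S) ∈
      { x : ℝ | ∃ S : Finset Ω, S.Nonempty ∧ x = dVar p (unifOn S) } := ⟨S, hSne, rfl⟩
  have hbdd : BddBelow { x : ℝ | ∃ S : Finset Ω, S.Nonempty ∧ x = dVar p (unifOn S) } := by
    refine ⟨0, fun x hx => ?_⟩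
    obtain ⟨T, _, rfl⟩ := hx
    exact mul_nonneg (by norm_num) (tsum_nonneg (fun ω => abs_nonneg _))
  exact le_trans (csInf_le hbdd hmem) hmain
end
end

section
/- Let p̄ = (p_n) be a general source and let F : ℝ → [0,1] be a nondecreasing function such that for every x ∈ ℝ, lim_{n→∞} p_n{−(1/n) log p_n(ω) < x} = F(x) (so the limit distribution function of the normalized log-likelihood exists). Then for every sequence of operations Ψ_n = (M_n, φ_n) such that a := liminf_n (1/n) log M_n is finite, liminf_{n→∞} (1/n) D(p_n∘φ_n⁻¹ ‖ u_{M_n}) ≥ ∫_{[0,a]} (a − x) dμ_F(x), where μ_F is the Lebesgue–Stieltjes measure associated with F. -/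
open Filter

noncomputable section

/-- Kullback–Leibler divergence between two distributions on `Fin M`. -/
def KL {M : ℕ} (q r : Fin M → ℝ) : ℝ := ∑ i, q i * Real.log (q i / r i)

open MeasureTheory

namespace NKLB

variable {Ω : Type*}

lemma prob_nonneg (p : Ω → ℝ) (hp : ∀ ω, 0 ≤ p ω) (S : Set Ω) : 0 ≤ prob p S :=
  tsum_nonneg fun ω => hp ω

lemma prob_eq (p : Ω → ℝ) (S : Set Ω) : prob p S = ∑' ω, S.indicator p ω :=
  tsum_subtype S p

lemma prob_mono (p : Ω → ℝ) (hp : Summable p) (hnn : ∀ ω, 0 ≤ p ω) {S T : Set Ω}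
    (hST : S ⊆ T) : prob p S ≤ prob p T := by
  rw [prob_eq, prob_eq]
  exact Summable.tsum_le_tsum (fun ω => Set.indicator_le_indicator_of_subset hST (fun ω => hnn ω) ω)
    (hp.indicator S) (hp.indicator T)

lemma prob_univ (p : Ω → ℝ) (hs : HasSum p 1) : prob p Set.univ = 1 := by
  rw [prob, tsum_univ, hs.tsum_eq]

lemma prob_empty_of (p : Ω → ℝ) {S : Set Ω} (h : ∀ ω, ω ∉ S) : prob p S = 0 := by
  have : S = ∅ := Set.eq_empty_iff_forall_notMem.2 h
  subst this
  rw [prob]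
  exact tsum_empty

lemma prob_partition {I : Type*} [DecidableEq I] (p : Ω → ℝ) (hp : Summable p)
    (ψ : Ω → I) (u : Finset I) (S : Set Ω) (h : ∀ ω ∈ S, ψ ω ∈ u) :
    prob p S = ∑ k ∈ u, prob p {ω | ω ∈ S ∧ ψ ω = k} := by
  simp only [prob_eq]
  rw [← Summable.tsum_finsetSum (fun k _ => hp.indicator _)]
  congr 1
  funext ω
  by_cases hω : ω ∈ S
  · rw [Set.indicator_of_mem hω]
    rw [Finset.sum_eq_single (ψ ω)]
    · rw [Set.indicator_of_mem (by exact ⟨hω, rfl⟩)]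
    · intro k _ hne
      refine Set.indicator_of_notMem ?_ p
      rintro ⟨-, rfl⟩; exact hne rfl
    · intro hmem; exact absurd (h ω hω) hmem
  · rw [Set.indicator_of_notMem hω, Finset.sum_eq_zero]
    intro k _
    refine Set.indicator_of_notMem ?_ p
    rintro ⟨hS, -⟩; exact hω hS

lemma prob_pos_witness (p : Ω → ℝ) (hnn : ∀ ω, 0 ≤ p ω) {S : Set Ω}
    (h : prob p S ≠ 0) : ∃ ω ∈ S, 0 < p ω := by
  by_contra hno
  push_neg at hno
  apply h
  have hz : ∀ ω : S, p ω = 0 := fun ω => le_antisymm (hno ω ω.2) (hnn ω)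
  calc prob p S = ∑' ω : S, (0:ℝ) := tsum_congr fun ω => hz ω
    _ = 0 := tsum_zero

lemma neg_inv_e_le_mul_log (x : ℝ) (hx : 0 ≤ x) : -(Real.exp 1)⁻¹ ≤ x * Real.log x := by
  rcases eq_or_lt_of_le hx with h | h
  · rw [← h]; simp [Real.exp_pos]
    positivity
  · have h1 : Real.log (1 / (x * Real.exp 1)) ≤ 1 / (x * Real.exp 1) - 1 :=
      Real.log_le_sub_one_of_pos (by positivity)
    rw [Real.log_div one_ne_zero (by positivity), Real.log_one,
      Real.log_mul (ne_of_gt h) (Real.exp_ne_zero 1), Real.log_exp] at h1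
    have h2 : -Real.log x ≤ 1 / (x * Real.exp 1) := by linarith
    have h3 : x * (-Real.log x) ≤ x * (1 / (x * Real.exp 1)) :=
      mul_le_mul_of_nonneg_left h2 hx
    have h4 : x * (1 / (x * Real.exp 1)) = (Real.exp 1)⁻¹ := by
      field_simp
    nlinarith

lemma log_term_le {Mr : ℝ} (hM : 1 ≤ Mr) (b S : ℝ) (hb : 0 ≤ b) (hbS : b ≤ S) :
    b * Real.log (Mr * b) ≤ b * Real.log (Mr * S) := by
  rcases eq_or_lt_of_le hb with h | h
  · rw [← h]; simp
  · apply mul_le_mul_of_nonneg_left _ hb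
    exact Real.log_le_log (by nlinarith) (by nlinarith)

lemma sum_mul_log_ge {m : ℕ} (s : Fin m → ℝ) (hnn : ∀ i, 0 ≤ s i) (B : ℝ) (hB1 : 1 ≤ B)
    (hcard : ((Finset.univ.filter fun i => s i ≠ 0).card : ℝ) ≤ B) :
    (∑ i, s i) * Real.log (∑ i, s i) - (∑ i, s i) * Real.log B ≤ ∑ i, s i * Real.log (s i) := by
  classical
  set S := ∑ i, s i with hS
  set T := Finset.univ.filter fun i => s i ≠ 0 with hT
  have hpos : ∀ i ∈ T, 0 < s i := fun i hi =>
    (hnn i).lt_of_ne (Ne.symm ((Finset.mem_filter.1 hi).2))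
  have hSnn : 0 ≤ S := Finset.sum_nonneg fun i _ => hnn i
  have hrestrict : ∑ i, s i * Real.log (s i) = ∑ i ∈ T, s i * Real.log (s i) := by
    rw [hT]
    rw [Finset.sum_filter_of_ne]
    intro i _ hne
    intro h0
    rw [h0] at hne; simp at hne
  have hSrestrict : S = ∑ i ∈ T, s i := by
    rw [hS, hT, Finset.sum_filter_of_ne]
    intro i _ hne; exact hne
  rcases eq_or_lt_of_le hSnn with h0 | hSpos
  · have hz : ∀ i ∈ (Finset.univ : Finset (Fin m)), s i = 0 :=
      (Finset.sum_eq_zero_iff_of_nonneg (fun i _ => hnn i)).1 h0.symm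
    have : ∑ i, s i * Real.log (s i) = 0 :=
      Finset.sum_eq_zero fun i hi => by rw [hz i hi, zero_mul]
    rw [this, ← h0]
    simp
  · have hTne : T.Nonempty := by
      by_contra h
      rw [Finset.not_nonempty_iff_eq_empty] at h
      rw [hSrestrict, h, Finset.sum_empty] at hSpos
      exact lt_irrefl _ hSpos
    have hN : (0:ℝ) < (T.card : ℝ) := by
      exact_mod_cast Finset.card_pos.2 hTne
    have key : ∑ i ∈ T, s i * (Real.log (S / T.card) - Real.log (s i)) ≤ 0 := by
      have hterm : ∀ i ∈ T, s i * (Real.log (S / T.card) - Real.log (s i))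
          ≤ S / T.card - s i := by
        intro i hi
        have hsi := hpos i hi
        have hx : 0 < (S / T.card) / s i := by positivity
        have hlog := Real.log_le_sub_one_of_pos hx
        rw [Real.log_div (by positivity) (ne_of_gt hsi)] at hlog
        have := mul_le_mul_of_nonneg_left hlog (le_of_lt hsi)
        calc s i * (Real.log (S / T.card) - Real.log (s i))
            ≤ s i * ((S / T.card) / s i - 1) := this
          _ = S / T.card - s i := by field_simp
      calc ∑ i ∈ T, s i * (Real.log (S / T.card) - Real.log (s i))
          ≤ ∑ i ∈ T, (S / T.card - s i) := Finset.sum_le_sum hterm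
        _ = T.card * (S / T.card) - S := by
            rw [Finset.sum_sub_distrib, Finset.sum_const, ← hSrestrict]
            simp [nsmul_eq_mul]
        _ = 0 := by field_simp; ring
    have expand : ∑ i ∈ T, s i * (Real.log (S / T.card) - Real.log (s i))
        = S * Real.log (S / T.card) - ∑ i ∈ T, s i * Real.log (s i) := by
      simp only [mul_sub]
      rw [Finset.sum_sub_distrib, ← Finset.sum_mul, ← hSrestrict]
    have main : S * Real.log (S / T.card) ≤ ∑ i, s i * Real.log (s i) := by
      rw [hrestrict]; linarith [key, expand.symm.trans_le key]
    have hfin : S * Real.log S - S * Real.log B ≤ S * Real.log (S / T.card) := by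
      rw [Real.log_div (ne_of_gt hSpos) (ne_of_gt hN)]
      have hlogle : Real.log (T.card : ℝ) ≤ Real.log B := Real.log_le_log hN hcard
      nlinarith
    linarith

lemma card_support_le {m : ℕ} (p : Ω → ℝ) (hnn : ∀ ω, 0 ≤ p ω) (hs : HasSum p 1)
    (φm : Ω → Fin m) (G : Ω → Prop) (δ : ℝ) (hδ : 0 < δ)
    (hG : ∀ ω, G ω → 0 < p ω → δ < p ω) :
    ((Finset.univ.filter fun i => prob p {ω | φm ω = i ∧ G ω} ≠ 0).card : ℝ) ≤ 1 / δ := by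
  classical
  set T := Finset.univ.filter fun i => prob p {ω | φm ω = i ∧ G ω} ≠ 0 with hT
  have hw : ∀ i : T, ∃ ω, (φm ω = (i : Fin m) ∧ G ω) ∧ 0 < p ω := by
    rintro ⟨i, hi⟩
    rw [hT, Finset.mem_filter] at hi
    obtain ⟨ω, hω, hpω⟩ := prob_pos_witness p hnn hi.2
    exact ⟨ω, hω, hpω⟩
  choose w hw1 hw2 using hw
  set W : Finset Ω := T.attach.image w with hW
  have hcard : W.card = T.card := by
    rw [hW, Finset.card_image_of_injOn, Finset.card_attach]
    intro i _ j _ hij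
    have h1 : φm (w i) = (i : Fin m) := (hw1 i).1
    have h2 : φm (w j) = (j : Fin m) := (hw1 j).1
    rw [hij, h2] at h1
    exact Subtype.ext h1.symm
  have hsum1 : ∑ ω ∈ W, p ω ≤ 1 := by
    have := Summable.sum_le_tsum W (fun ω _ => hnn ω) hs.summable
    rwa [hs.tsum_eq] at this
  have hWlb : ∀ ω ∈ W, δ ≤ p ω := by
    intro ω hω
    rw [hW, Finset.mem_image] at hω
    obtain ⟨i, _, rfl⟩ := hω
    exact le_of_lt (hG _ (hw1 i).2 (hw2 i))
  have hδcard : (W.card : ℝ) * δ ≤ 1 := by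
    calc (W.card : ℝ) * δ = ∑ _ω ∈ W, δ := by rw [Finset.sum_const, nsmul_eq_mul]
      _ ≤ ∑ ω ∈ W, p ω := Finset.sum_le_sum fun ω hω => hWlb ω hω
      _ ≤ 1 := hsum1
  rw [le_div_iff₀ hδ, ← hcard]
  exact hδcard

lemma sum_log_split {m : ℕ} (s : Fin m → ℝ) (hm : 0 < m) (hnn : ∀ i, 0 ≤ s i) :
    ∑ i, s i * Real.log ((m:ℝ) * s i)
      = (∑ i, s i) * Real.log m + ∑ i, s i * Real.log (s i) := by
  have hterm : ∀ i, s i * Real.log ((m:ℝ) * s i)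
      = s i * Real.log m + s i * Real.log (s i) := by
    intro i
    rcases eq_or_lt_of_le (hnn i) with h | h
    · rw [← h]; simp
    · rw [Real.log_mul (by positivity) (ne_of_gt h)]; ring
  rw [Finset.sum_congr rfl (fun i _ => hterm i), Finset.sum_add_distrib, ← Finset.sum_mul]

lemma KL_unif_eq {m : ℕ} (hm : 0 < m) (q : Fin m → ℝ) :
    KL q (unif m) = ∑ i, q i * Real.log ((m:ℝ) * q i) := by
  unfold KL unif
  refine Finset.sum_congr rfl fun i _ => ?_
  rw [one_div, div_eq_mul_inv, inv_inv, mul_comm (q i) ((m:ℝ))]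

lemma push_sum_eq_one {m : ℕ} (p : Ω → ℝ) (hs : HasSum p 1) (φm : Ω → Fin m) :
    ∑ i, push p φm i = 1 := by
  classical
  rw [show (1:ℝ) = prob p Set.univ from (prob_univ p hs).symm,
    prob_partition p hs.summable φm Finset.univ Set.univ (fun ω _ => Finset.mem_univ _)]
  refine Finset.sum_congr rfl fun i _ => ?_
  unfold push
  congr 1
  ext ω
  simp [Set.mem_setOf_eq]

lemma card_filter_le_m {m : ℕ} (s : Fin m → ℝ) :
    ((Finset.univ.filter fun i => s i ≠ 0).card : ℝ) ≤ (m : ℝ) := by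
  classical
  have := Finset.card_filter_le (Finset.univ : Finset (Fin m)) (fun i => s i ≠ 0)
  rw [Finset.card_univ, Fintype.card_fin] at this
  exact_mod_cast this

lemma KL_unif_nonneg {m : ℕ} (hm : 0 < m) (p : Ω → ℝ) (hnn : ∀ ω, 0 ≤ p ω)
    (hs : HasSum p 1) (φm : Ω → Fin m) : 0 ≤ KL (push p φm) (unif m) := by
  have hm1 : (1:ℝ) ≤ m := by exact_mod_cast hm
  have hqnn : ∀ i, 0 ≤ push p φm i := fun i => prob_nonneg p hnn _
  have hq1 := push_sum_eq_one p hs φm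
  have hgibbs := sum_mul_log_ge (push p φm) hqnn m hm1 (card_filter_le_m _)
  rw [hq1] at hgibbs
  rw [KL_unif_eq hm, sum_log_split _ hm hqnn, hq1]
  simp only [Real.log_one] at hgibbs ⊢
  linarith

lemma core_bound {m : ℕ} (hm : 0 < m)
    (p : Ω → ℝ) (hnn : ∀ ω, 0 ≤ p ω) (hs : HasSum p 1)
    (φm : Ω → Fin m) (r : ℝ) (hr : 0 < r)
    (L : Ω → ℝ) (hL0 : ∀ ω, 0 ≤ L ω)
    (hLp : ∀ ω x, L ω < x → 0 < p ω → Real.exp (-(r * x)) < p ω)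
    (K : ℕ) (t : ℕ → ℝ) (ht0 : t 0 = 0) (htmono : Monotone t) :
    (∑ k ∈ Finset.Icc 1 K,
      (prob p {ω | L ω < t k} - prob p {ω | L ω < t (k - 1)}) * (Real.log m - r * t k))
      - ((K : ℝ) + 1) * (Real.exp 1)⁻¹
    ≤ KL (push p φm) (unif m) := by
  classical
  have hm1 : (1:ℝ) ≤ m := by exact_mod_cast hm
  set γ : Ω → ℕ := fun ω => ((Finset.range (K+1)).filter fun j => t j ≤ L ω).card with hγ
  have hγ1 : ∀ ω, 1 ≤ γ ω := by
    intro ω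
    apply Finset.card_pos.2
    exact ⟨0, Finset.mem_filter.2 ⟨Finset.mem_range.2 (Nat.succ_pos K),
      by rw [ht0]; exact hL0 ω⟩⟩
  have hγK : ∀ ω, γ ω ≤ K + 1 := fun ω =>
    le_trans (Finset.card_filter_le _ _) (le_of_eq (Finset.card_range _))
  have hchar : ∀ ω, ∀ j, j ≤ K → (γ ω ≤ j ↔ L ω < t j) := by
    intro ω j hj
    constructor
    · intro hle
      by_contra hnot
      push_neg at hnot
      have hsub : Finset.range (j+1) ⊆ (Finset.range (K+1)).filter fun j' => t j' ≤ L ω := by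
        intro j' hj'
        rw [Finset.mem_range] at hj'
        refine Finset.mem_filter.2 ⟨Finset.mem_range.2 (by omega), ?_⟩
        exact le_trans (htmono (by omega : j' ≤ j)) hnot
      have hcle := Finset.card_le_card hsub
      rw [Finset.card_range] at hcle
      rw [hγ] at hle
      simp only at hle
      omega
    · intro hlt
      have hsub : (Finset.range (K+1)).filter (fun j' => t j' ≤ L ω) ⊆ Finset.range j := by
        intro j' hj'
        rw [Finset.mem_filter] at hj'
        rw [Finset.mem_range]
        by_contra hge
        push_neg at hge
        exact absurd (le_trans (htmono hge) hj'.2) (not_le.2 hlt)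
      have hcle := Finset.card_le_card hsub
      rw [Finset.card_range] at hcle
      rw [hγ]
      exact hcle
  set P : ℕ → ℝ := fun k => prob p {ω | γ ω = k} with hP
  set s : ℕ → Fin m → ℝ := fun k i => prob p {ω | φm ω = i ∧ γ ω = k} with hsdef
  have snn : ∀ k i, 0 ≤ s k i := fun k i => prob_nonneg p hnn _
  have hPnn : ∀ k, 0 ≤ P k := fun k => prob_nonneg p hnn _
  have d1 : ∀ i, push p φm i = ∑ k ∈ Finset.Icc 1 (K+1), s k i := by
    intro i
    unfold push
    rw [prob_partition p hs.summable γ (Finset.Icc 1 (K+1)) {ω | φm ω = i}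
      (fun ω _ => Finset.mem_Icc.2 ⟨hγ1 ω, hγK ω⟩)]
    refine Finset.sum_congr rfl fun k _ => ?_
    rw [hsdef]
    congr 1
  have d2 : ∀ k, ∑ i, s k i = P k := by
    intro k
    rw [hP]
    simp only
    rw [prob_partition p hs.summable φm Finset.univ {ω | γ ω = k}
      (fun ω _ => Finset.mem_univ _)]
    refine Finset.sum_congr rfl fun i _ => ?_
    rw [hsdef]
    show prob p {ω | φm ω = i ∧ γ ω = k} = _
    congr 1
    ext ω
    simp only [Set.mem_setOf_eq]
    tauto
  have d3 : ∀ j, j ≤ K → prob p {ω | L ω < t j} = ∑ k ∈ Finset.Icc 1 j, P k := by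
    intro j hj
    rw [prob_partition p hs.summable γ (Finset.Icc 1 j) {ω | L ω < t j}
      (fun ω hω => Finset.mem_Icc.2 ⟨hγ1 ω, (hchar ω j hj).2 hω⟩)]
    refine Finset.sum_congr rfl fun k hk => ?_
    have hset : {ω | ω ∈ {ω' | L ω' < t j} ∧ γ ω = k} = {ω | γ ω = k} := by
      ext ω
      simp only [Set.mem_setOf_eq]
      constructor
      · rintro ⟨-, h⟩; exact h
      · intro h
        rw [Finset.mem_Icc] at hk
        refine ⟨(hchar ω j hj).1 ?_, h⟩
        omega
    rw [hset, hP]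
  have d4 : ∀ k, 1 ≤ k → k ≤ K →
      prob p {ω | L ω < t k} - prob p {ω | L ω < t (k - 1)} = P k := by
    intro k hk1 hkK
    rw [d3 k hkK, d3 (k-1) (le_trans (Nat.sub_le k 1) hkK)]
    have hk' : k - 1 + 1 = k := by omega
    rw [← hk', Finset.sum_Icc_succ_top (by omega : 1 ≤ k - 1 + 1)]
    rw [hk']
    ring
  -- step 2 : per-group lower bound
  have step2 : ∀ k ∈ Finset.Icc 1 (K+1),
      (if k ≤ K then P k * (Real.log m - r * t k) else 0) - (Real.exp 1)⁻¹
        ≤ ∑ i, s k i * Real.log ((m:ℝ) * s k i) := by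
    intro k hk
    rw [sum_log_split (s k) hm (snn k), d2 k]
    have hxlogx := neg_inv_e_le_mul_log (P k) (hPnn k)
    by_cases hkK : k ≤ K
    · rw [if_pos hkK]
      have htk0 : 0 ≤ t k := ht0 ▸ htmono (Nat.zero_le k)
      have hB1 : (1:ℝ) ≤ Real.exp (r * t k) := Real.one_le_exp (by positivity)
      have hcard : ((Finset.univ.filter fun i => s k i ≠ 0).card : ℝ) ≤ Real.exp (r * t k) := by
        have := card_support_le p hnn hs φm (fun ω => γ ω = k) (Real.exp (-(r * t k)))
          (Real.exp_pos _) (fun ω hω hpω => hLp ω (t k) ((hchar ω k hkK).1 (le_of_eq hω)) hpω)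
        rw [Real.exp_neg, one_div, inv_inv] at this
        exact this
      have hgibbs := sum_mul_log_ge (s k) (snn k) (Real.exp (r * t k)) hB1 hcard
      rw [d2 k, Real.log_exp] at hgibbs
      nlinarith
    · rw [if_neg hkK]
      have hgibbs := sum_mul_log_ge (s k) (snn k) m hm1 (card_filter_le_m (s k))
      rw [d2 k] at hgibbs
      linarith
  -- combine
  have main : ∑ k ∈ Finset.Icc 1 (K+1),
      ((if k ≤ K then P k * (Real.log m - r * t k) else 0) - (Real.exp 1)⁻¹)
      ≤ KL (push p φm) (unif m) := by
    calc ∑ k ∈ Finset.Icc 1 (K+1),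
          ((if k ≤ K then P k * (Real.log m - r * t k) else 0) - (Real.exp 1)⁻¹)
        ≤ ∑ k ∈ Finset.Icc 1 (K+1), ∑ i, s k i * Real.log ((m:ℝ) * s k i) :=
          Finset.sum_le_sum step2
      _ = ∑ i, ∑ k ∈ Finset.Icc 1 (K+1), s k i * Real.log ((m:ℝ) * s k i) :=
          Finset.sum_comm
      _ ≤ ∑ i, push p φm i * Real.log ((m:ℝ) * push p φm i) := by
          refine Finset.sum_le_sum fun i _ => ?_
          calc ∑ k ∈ Finset.Icc 1 (K+1), s k i * Real.log ((m:ℝ) * s k i)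
              ≤ ∑ k ∈ Finset.Icc 1 (K+1), s k i * Real.log ((m:ℝ) * push p φm i) := by
                refine Finset.sum_le_sum fun k hk => ?_
                refine log_term_le hm1 _ _ (snn k i) ?_
                rw [d1 i]
                exact Finset.single_le_sum (fun k' _ => snn k' i) hk
            _ = push p φm i * Real.log ((m:ℝ) * push p φm i) := by
                rw [← Finset.sum_mul, ← d1 i]
      _ = KL (push p φm) (unif m) := (KL_unif_eq hm _).symm
  -- rewrite LHS
  have lhs_eq : ∑ k ∈ Finset.Icc 1 (K+1),
      ((if k ≤ K then P k * (Real.log m - r * t k) else 0) - (Real.exp 1)⁻¹)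
      = (∑ k ∈ Finset.Icc 1 K, P k * (Real.log m - r * t k))
        - ((K : ℝ) + 1) * (Real.exp 1)⁻¹ := by
    rw [Finset.sum_sub_distrib, Finset.sum_const, Nat.card_Icc]
    have h1 : ∑ k ∈ Finset.Icc 1 (K+1), (if k ≤ K then P k * (Real.log m - r * t k) else 0)
        = ∑ k ∈ Finset.Icc 1 K, P k * (Real.log m - r * t k) := by
      rw [Finset.sum_Icc_succ_top (by omega : 1 ≤ K + 1)]
      rw [if_neg (by omega)]
      rw [add_zero]
      refine Finset.sum_congr rfl fun k hk => ?_
      rw [Finset.mem_Icc] at hk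
      rw [if_pos hk.2]
    rw [h1]
    have : (K + 1 + 1 - 1) = K + 1 := by omega
    rw [this]
    simp [nsmul_eq_mul]
  have sum_eq : ∑ k ∈ Finset.Icc 1 K,
      (prob p {ω | L ω < t k} - prob p {ω | L ω < t (k - 1)}) * (Real.log m - r * t k)
      = ∑ k ∈ Finset.Icc 1 K, P k * (Real.log m - r * t k) := by
    refine Finset.sum_congr rfl fun k hk => ?_
    rw [Finset.mem_Icc] at hk
    rw [d4 k hk.1 hk.2]
  rw [sum_eq]
  rw [← lhs_eq]
  exact main


lemma icc_to_range (g : ℕ → ℝ) (K : ℕ) :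
    ∑ k ∈ Finset.Icc 1 K, g k = ∑ j ∈ Finset.range K, g (j+1) := by
  induction K with
  | zero => simp
  | succ K ih => rw [Finset.sum_Icc_succ_top (by omega), ih, Finset.sum_range_succ]

lemma abel_sum (G : ℕ → ℝ) (x h : ℝ) (K : ℕ) :
    ∑ j ∈ Finset.range K, (x - ((j:ℝ)+1) * h) * (G (j+1) - G j)
      = (x - K * h) * G K - x * G 0 + h * ∑ j ∈ Finset.range K, G j := by
  induction K with
  | zero => simp
  | succ K ih =>
      rw [Finset.sum_range_succ, ih, Finset.sum_range_succ]
      push_cast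
      ring

lemma piece_bound (f : StieltjesFunction ℝ) (a u v : ℝ) (huv : u ≤ v) :
    ∫ x in Set.Ioc u v, (a - x) ∂f.measure ≤ (a - u) * (f v - f u) := by
  have hfin : f.measure (Set.Ioc u v) < ⊤ := by
    rw [f.measure_Ioc]; exact ENNReal.ofReal_lt_top
  have hint : IntegrableOn (fun x : ℝ => a - x) (Set.Ioc u v) f.measure :=
    ((continuous_const.sub continuous_id).integrableOn_Icc).mono_set Set.Ioc_subset_Icc_self
  calc ∫ x in Set.Ioc u v, (a - x) ∂f.measure
      ≤ ∫ _x in Set.Ioc u v, (a - u) ∂f.measure := by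
        refine setIntegral_mono_on hint (integrableOn_const hfin.ne)
          measurableSet_Ioc fun x hx => ?_
        have := hx.1
        linarith
    _ = (f.measure (Set.Ioc u v)).toReal * (a - u) := by
        rw [setIntegral_const, smul_eq_mul, measureReal_def]
    _ = (f v - f u) * (a - u) := by
        rw [f.measure_Ioc, ENNReal.toReal_ofReal (by linarith [f.mono huv] : (0:ℝ) ≤ f v - f u)]
    _ = (a - u) * (f v - f u) := mul_comm _ _

lemma integral_split (f : StieltjesFunction ℝ) (a : ℝ) (ha : 0 < a) (t : ℕ → ℝ)
    (htm : Monotone t) (ht0 : t 0 = 0) (K : ℕ) (hta : ∀ j, j ≤ K → t j ≤ a)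
    (hnull : f.measure (Set.Ioo (-1) 0) = 0) :
    ∀ j, j + 1 ≤ K →
      ∫ x in Set.Ioc (-1) (t (j+1)), (a - x) ∂f.measure
        ≤ a * (f (t 1) - f (-1))
          + ∑ i ∈ Finset.range j, (a - t (i+1)) * (f (t (i+2)) - f (t (i+1))) := by
  have hint : ∀ u v : ℝ, IntegrableOn (fun x : ℝ => a - x) (Set.Ioc u v) f.measure :=
    fun u v => ((continuous_const.sub continuous_id).integrableOn_Icc).mono_set
      Set.Ioc_subset_Icc_self
  have htnn : ∀ j, 0 ≤ t j := fun j => ht0 ▸ htm (Nat.zero_le j)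
  intro j
  induction j with
  | zero =>
      intro h1
      rw [Finset.sum_range_zero, add_zero]
      -- base case : Ioc (-1) (t 1) =ᵐ Icc 0 (t 1)
      have haeq : Set.Ioc (-1:ℝ) (t 1) =ᶠ[ae f.measure] Set.Icc 0 (t 1) := by
        rw [MeasureTheory.ae_eq_set]
        constructor
        · have hss : Set.Ioc (-1:ℝ) (t 1) \ Set.Icc 0 (t 1) ⊆ Set.Ioo (-1) 0 := by
            intro x hx
            obtain ⟨⟨h1, h2⟩, h3⟩ := hx
            simp only [Set.mem_Icc, not_and, not_le] at h3
            constructor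
            · exact h1
            · by_contra hge
              push_neg at hge
              exact absurd (h3 hge) (not_lt.2 h2)
          exact measure_mono_null hss hnull
        · have hss : Set.Icc (0:ℝ) (t 1) \ Set.Ioc (-1) (t 1) = ∅ :=
            Set.diff_eq_empty.2 (fun x hx => ⟨by linarith [hx.1], hx.2⟩)
          rw [hss]
          exact measure_empty
      rw [setIntegral_congr_set haeq]
      have hfin : f.measure (Set.Icc 0 (t 1)) < ⊤ := by
        refine lt_of_le_of_lt (measure_mono
          (show Set.Icc (0:ℝ) (t 1) ⊆ Set.Ioc (-1) (t 1) from
            fun x hx => ⟨by linarith [hx.1], hx.2⟩)) ?_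
        rw [f.measure_Ioc]
        exact ENNReal.ofReal_lt_top
      calc ∫ x in Set.Icc 0 (t 1), (a - x) ∂f.measure
          ≤ ∫ _x in Set.Icc 0 (t 1), a ∂f.measure := by
            refine setIntegral_mono_on
              (((continuous_const.sub continuous_id).integrableOn_Icc))
              (integrableOn_const hfin.ne) measurableSet_Icc fun x hx => ?_
            linarith [hx.1]
        _ = (f.measure (Set.Icc 0 (t 1))).toReal * a := by rw [setIntegral_const, smul_eq_mul, measureReal_def]
        _ ≤ (f (t 1) - f (-1)) * a := by
            refine mul_le_mul_of_nonneg_right ?_ (le_of_lt ha)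
            refine le_trans (ENNReal.toReal_mono ?_ (measure_mono
              (show Set.Icc (0:ℝ) (t 1) ⊆ Set.Ioc (-1) (t 1) from
                fun x hx => ⟨by linarith [hx.1], hx.2⟩))) ?_
            · rw [f.measure_Ioc]; exact ENNReal.ofReal_ne_top
            · rw [f.measure_Ioc, ENNReal.toReal_ofReal
                (by linarith [f.mono (show (-1:ℝ) ≤ t 1 by linarith [htnn 1])] : (0:ℝ) ≤ f (t 1) - f (-1))]

        _ = a * (f (t 1) - f (-1)) := mul_comm _ _
  | succ j ih =>
      intro hj1
      have hprev := ih (by omega)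
      have hsplit : Set.Ioc (-1:ℝ) (t (j+2)) = Set.Ioc (-1) (t (j+1)) ∪ Set.Ioc (t (j+1)) (t (j+2)) := by
        rw [Set.Ioc_union_Ioc_eq_Ioc (by linarith [htnn (j+1)] : (-1:ℝ) ≤ t (j+1))
          (htm (by omega : j+1 ≤ j+2))]
      rw [hsplit, setIntegral_union (Set.Ioc_disjoint_Ioc_of_le le_rfl) measurableSet_Ioc
        (hint _ _) (hint _ _)]
      rw [Finset.sum_range_succ]
      have hpiece := piece_bound f a (t (j+1)) (t (j+2)) (htm (by omega : j+1 ≤ j+2))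
      linarith


end NKLB

set_option maxHeartbeats 2000000 in
/-- if the normalized log-likelihood has a limiting distribution
function `F`, then for every sequence of operations with first-order rate `a`,
the normalized divergence from uniform is asymptotically at least
`∫_{[0,a]} (a - x) dμ_F`. -/
theorem normalized_KL_lower_bound
    (Ω : ℕ → Type) [∀ n, Countable (Ω n)]
    (p : ∀ n, Ω n → ℝ)
    (hnonneg : ∀ n ω, 0 ≤ p n ω)
    (hsum : ∀ n, HasSum (p n) 1)
    (F : ℝ → ℝ) (hFmono : Monotone F) (hF01 : ∀ x, F x ∈ Set.Icc (0 : ℝ) 1)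
    (hFlim : ∀ x : ℝ,
      Tendsto (fun n => prob (p n) {ω | -(1 / (n : ℝ)) * Real.log (p n ω) < x})
        atTop (nhds (F x)))
    (M : ℕ → ℕ) (hM : ∀ n, 0 < M n)
    (φ : ∀ n, Ω n → Fin (M n))
    (a : ℝ)
    (ha : Filter.liminf (fun n => ((Real.log (M n) / n : ℝ) : EReal)) atTop = (a : EReal)) :
    Filter.liminf
        (fun n => ((KL (push (p n) (φ n)) (unif (M n)) / n : ℝ) : EReal)) atTop
      ≥ ((∫ x in Set.Icc 0 a, (a - x) ∂(hFmono.stieltjesFunction.measure) : ℝ) : EReal) := by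
  classical
  set f := hFmono.stieltjesFunction with hfdef
  have hp1 : ∀ n ω, p n ω ≤ 1 := fun n ω => le_hasSum (hsum n) ω (fun j _ => hnonneg n j)
  have hL0 : ∀ (n : ℕ) ω, 0 ≤ -(1 / (n:ℝ)) * Real.log (p n ω) := by
    intro n ω
    have hlog : Real.log (p n ω) ≤ 0 := Real.log_nonpos (hnonneg n ω) (hp1 n ω)
    have h2 : (0:ℝ) ≤ 1 / (n:ℝ) := by positivity
    nlinarith
  have hF0 : ∀ x : ℝ, x ≤ 0 → F x = 0 := by
    intro x hx
    refine tendsto_nhds_unique (hFlim x) ?_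
    have hnul : ∀ n : ℕ, prob (p n) {ω | -(1 / (n : ℝ)) * Real.log (p n ω) < x} = 0 := by
      intro n
      apply NKLB.prob_empty_of
      intro ω hω
      exact absurd hω (not_lt.2 (le_trans hx (hL0 n ω)))
    simp only [hnul]
    exact tendsto_const_nhds
  have hfval : ∀ x, f x = Function.rightLim F x := fun x => hFmono.stieltjesFunction_eq x
  have hfle1 : ∀ x, f x ≤ 1 := fun x => by
    rw [hfval]; exact le_trans (hFmono.rightLim_le (lt_add_one x)) (hF01 (x+1)).2
  have hfnn : ∀ x, 0 ≤ f x := fun x => by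
    rw [hfval]; exact le_trans (hF01 x).1 (hFmono.le_rightLim le_rfl)
  have hfneg : ∀ x : ℝ, x < 0 → f x = 0 := by
    intro x hx
    refine le_antisymm ?_ (hfnn x)
    rw [hfval]
    calc Function.rightLim F x ≤ F (x/2) := hFmono.rightLim_le (by linarith)
      _ = 0 := hF0 _ (by linarith)
  have hfm1 : f (-1) = 0 := hfneg _ (by norm_num)
  have hnull : f.measure (Set.Ioo (-1) 0) = 0 := by
    rw [StieltjesFunction.measure_Ioo]
    have hleft : Function.leftLim (⇑f) 0 = 0 := by
      refine leftLim_eq_of_tendsto ?_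
      refine Tendsto.congr' ?_ tendsto_const_nhds
      filter_upwards [self_mem_nhdsWithin] with y hy
      exact (hfneg y hy).symm
    rw [hleft, hfm1, sub_zero]
    simp
  have ha0 : 0 ≤ a := by
    have h0 : (0:EReal) ≤ liminf (fun n => ((Real.log (M n) / n : ℝ) : EReal)) atTop := by
      apply le_liminf_of_le (by isBoundedDefault)
      refine Filter.Eventually.of_forall fun n => ?_
      refine EReal.coe_nonneg.2 ?_
      exact div_nonneg (Real.log_nonneg (by exact_mod_cast hM n)) (Nat.cast_nonneg n)
    rw [ha] at h0
    exact EReal.coe_nonneg.1 h0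
  have hDnn : ∀ n : ℕ, 0 ≤ KL (push (p n) (φ n)) (unif (M n)) / n := fun n =>
    div_nonneg (NKLB.KL_unif_nonneg (hM n) (p n) (hnonneg n) (hsum n) (φ n)) (Nat.cast_nonneg n)
  rw [ge_iff_le]
  rcases eq_or_lt_of_le ha0 with haeq | hapos
  · -- a = 0
    have hI : ∫ x in Set.Icc (0:ℝ) a, (a - x) ∂f.measure = 0 := by
      rw [← haeq, Set.Icc_self, MeasureTheory.integral_singleton]
      simp
    rw [hI]
    have h00 : ((0:ℝ):EReal) = (0:EReal) := rfl
    rw [h00]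
    apply le_liminf_of_le (by isBoundedDefault)
    exact Filter.Eventually.of_forall fun n => EReal.coe_nonneg.2 (hDnn n)
  · -- a > 0
    set I := ∫ x in Set.Icc (0:ℝ) a, (a - x) ∂f.measure with hIdef
    by_contra hcon
    rw [not_le] at hcon
    obtain ⟨w, hw1, hw2⟩ := EReal.exists_between_coe_real hcon
    have hwI : w < I := EReal.coe_lt_coe_iff.1 hw2
    set d := I - w with hd
    have hdpos : 0 < d := sub_pos.2 hwI
    obtain ⟨K0, hK0⟩ := exists_nat_gt (4 * a / d)
    have hKpos : (0:ℝ) < ((K0:ℝ) + 1) := by positivity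
    have hKbig : 4 * a / d < (K0:ℝ) + 1 := lt_trans hK0 (by linarith)
    have h4a : 4 * a < ((K0:ℝ) + 1) * d := by
      have := (div_lt_iff₀ hdpos).1 hKbig
      linarith
    set h := a / ((K0:ℝ) + 1) with hhdef
    have hhpos : 0 < h := div_pos hapos hKpos
    have h4h : 4 * h < d := by
      rw [hhdef, show 4 * (a / ((K0:ℝ)+1)) = 4 * a / ((K0:ℝ)+1) from by ring]
      rw [div_lt_iff₀ hKpos]
      linarith
    set t : ℕ → ℝ := fun j => (j:ℝ) * h with htdef
    have ht0 : t 0 = 0 := by simp [htdef]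
    have htmono : Monotone t := by
      intro i j hij
      simp only [htdef]
      exact mul_le_mul_of_nonneg_right (by exact_mod_cast hij) (le_of_lt hhpos)
    have htcast : ∀ j : ℕ, t (j+1) = ((j:ℝ)+1) * h := by
      intro j; simp only [htdef]; push_cast; ring
    have hKh : ((K0:ℝ) + 1) * h = a := by
      rw [hhdef]; field_simp
    have htK : t (K0+1) = a := by
      rw [htcast]
      exact hKh
    have hta : ∀ j, j ≤ K0 + 1 → t j ≤ a := fun j hj => htK ▸ htmono hj
    have htnn : ∀ j, 0 ≤ t j := fun j => ht0 ▸ htmono (Nat.zero_le j)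
    set ε := d / 4 with hεdef
    have hεpos : 0 < ε := by positivity
    set Q : ℕ → ℝ → ℝ :=
      fun n x => prob (p n) {ω | -(1 / (n:ℝ)) * Real.log (p n ω) < x} with hQ
    set B := ∑ j ∈ Finset.range (K0+1), (F (t (j+1)) - F (t j)) * ((a - ε) - t (j+1)) with hB
    -- ================== Step A : liminf ≥ B ==================
    have hev1 : ∀ᶠ n : ℕ in atTop, a - ε ≤ Real.log (M n) / n := by
      have hlt : ((a - ε : ℝ) : EReal)
          < liminf (fun n => ((Real.log (M n) / n : ℝ) : EReal)) atTop := by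
        rw [ha]
        exact EReal.coe_lt_coe_iff.2 (by linarith)
      filter_upwards [eventually_lt_of_lt_liminf hlt] with n hn
      exact le_of_lt (EReal.coe_lt_coe_iff.1 hn)
    set hfn : ℕ → ℝ := fun n =>
      (∑ j ∈ Finset.range (K0+1), (Q n (t (j+1)) - Q n (t j)) * ((a - ε) - t (j+1)))
        - ((K0:ℝ) + 1 + 1) * (Real.exp 1)⁻¹ / n with hhfn
    have hevb : ∀ᶠ n : ℕ in atTop,
        hfn n ≤ KL (push (p n) (φ n)) (unif (M n)) / n := by
      filter_upwards [hev1, eventually_ge_atTop 1] with n hn1 hn2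
      have hnpos : (0:ℝ) < n := by exact_mod_cast hn2
      have hLp : ∀ ω x, (-(1 / (n:ℝ)) * Real.log (p n ω)) < x → 0 < p n ω →
          Real.exp (-((n:ℝ) * x)) < p n ω := by
        intro ω x hx hp
        have h2 := mul_lt_mul_of_pos_left hx hnpos
        have h3 : (n:ℝ) * (-(1 / n) * Real.log (p n ω)) = -Real.log (p n ω) := by
          field_simp
        rw [h3] at h2
        calc Real.exp (-((n:ℝ) * x)) < Real.exp (Real.log (p n ω)) :=
              Real.exp_lt_exp.2 (by linarith)
          _ = p n ω := Real.exp_log hp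
      have hcore := NKLB.core_bound (hM n) (p n) (hnonneg n) (hsum n) (φ n) ((n:ℝ)) hnpos
        (fun ω => -(1 / (n:ℝ)) * Real.log (p n ω)) (hL0 n) hLp (K0+1) t ht0 htmono
      have hdiv := (div_le_div_iff_of_pos_right hnpos).2 hcore
      refine le_trans ?_ hdiv
      rw [sub_div]
      have hconv : (∑ k ∈ Finset.Icc 1 (K0+1),
            (prob (p n) {ω | -(1 / (n:ℝ)) * Real.log (p n ω) < t k}
              - prob (p n) {ω | -(1 / (n:ℝ)) * Real.log (p n ω) < t (k-1)})
              * (Real.log (M n) - (n:ℝ) * t k))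
          = ∑ j ∈ Finset.range (K0+1),
              (Q n (t (j+1)) - Q n (t j)) * (Real.log (M n) - (n:ℝ) * t (j+1)) := by
        rw [NKLB.icc_to_range]
        refine Finset.sum_congr rfl fun j _ => ?_
        rw [show j + 1 - 1 = j from by omega]
      rw [hconv, Finset.sum_div]
      simp only [hhfn]
      refine sub_le_sub ?_ (by push_cast; exact le_rfl)
      refine Finset.sum_le_sum fun j _ => ?_
      have hΔ : 0 ≤ Q n (t (j+1)) - Q n (t j) := by
        have hmono := NKLB.prob_mono (p n) (hsum n).summable (hnonneg n)
          (show {ω | -(1/(n:ℝ)) * Real.log (p n ω) < t j}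
              ⊆ {ω | -(1/(n:ℝ)) * Real.log (p n ω) < t (j+1)} from
            fun ω hω => lt_of_lt_of_le hω (htmono (by omega)))
        simp only [hQ]
        linarith
      have heq : (Q n (t (j+1)) - Q n (t j)) * (Real.log (M n) - (n:ℝ) * t (j+1)) / n
          = (Q n (t (j+1)) - Q n (t j)) * (Real.log (M n) / n - t (j+1)) := by
        field_simp
      rw [heq]
      exact mul_le_mul_of_nonneg_left (by linarith) hΔ
    have htendsto : Tendsto hfn atTop (nhds B) := by
      have h1 : Tendsto (fun n => ∑ j ∈ Finset.range (K0+1),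
          (Q n (t (j+1)) - Q n (t j)) * ((a - ε) - t (j+1))) atTop (nhds B) := by
        rw [hB]
        refine tendsto_finset_sum _ fun j _ => ?_
        exact ((hFlim (t (j+1))).sub (hFlim (t j))).mul_const _
      have h2 : Tendsto (fun n : ℕ => ((K0:ℝ) + 1 + 1) * (Real.exp 1)⁻¹ / n)
          atTop (nhds 0) := tendsto_const_div_atTop_nhds_zero_nat _
      have h3 := h1.sub h2
      rw [sub_zero] at h3
      exact h3
    have hlimB : ((B:ℝ):EReal)
        ≤ liminf (fun n => ((KL (push (p n) (φ n)) (unif (M n)) / n : ℝ) : EReal)) atTop := by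
      have hconv2 : Tendsto (fun n => ((hfn n : ℝ) : EReal)) atTop (nhds ((B:ℝ):EReal)) :=
        (continuous_coe_real_ereal.tendsto B).comp htendsto
      rw [← hconv2.liminf_eq]
      refine liminf_le_liminf ?_ (by isBoundedDefault) (by isBoundedDefault)
      filter_upwards [hevb] with n hn
      exact EReal.coe_le_coe_iff.2 hn
    -- ================== Step B : w ≤ B ==================
    -- measure-side estimate
    have hstep1 : I ≤ ∫ x in Set.Ioc (-1 : ℝ) a, (a - x) ∂f.measure := by
      rw [hIdef]
      refine setIntegral_mono_set
        (((continuous_const.sub continuous_id).integrableOn_Icc).mono_set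
          Set.Ioc_subset_Icc_self) ?_ ?_
      · filter_upwards [ae_restrict_mem measurableSet_Ioc] with x hx
        simp only [Pi.zero_apply]
        linarith [hx.2]
      · exact HasSubset.Subset.eventuallyLE
          (fun x hx => ⟨lt_of_lt_of_le (by norm_num) hx.1, hx.2⟩)
    have hstep2 := NKLB.integral_split f a hapos t htmono ht0 (K0+1) hta hnull K0 le_rfl
    rw [htK] at hstep2
    have hmeas_sum : ∑ i ∈ Finset.range K0, (a - t (i+1)) * (f (t (i+2)) - f (t (i+1)))
        = (a - (K0:ℝ) * h) * f (t (K0+1)) - a * f (t 1)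
          + h * ∑ j ∈ Finset.range K0, f (t (j+1)) := by
      rw [← NKLB.abel_sum (fun j => f (t (j+1))) a h K0]
      exact Finset.sum_congr rfl fun i _ => by rw [htcast i]
    have hSle : ∑ j ∈ Finset.range K0, f (t (j+1))
        ≤ (∑ j ∈ Finset.range K0, F (t (j+1))) + 1 := by
      have hS1 : ∑ j ∈ Finset.range K0, f (t (j+1))
          ≤ ∑ j ∈ Finset.range K0, F (t (j+2)) := by
        refine Finset.sum_le_sum fun j _ => ?_
        rw [hfval]
        refine hFmono.rightLim_le ?_
        rw [htcast j, htcast (j+1)]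
        push_cast
        nlinarith
      have hS2 := Finset.sum_range_sub (fun j => F (t (j+1))) K0
      rw [Finset.sum_sub_distrib] at hS2
      have hS3 : F (t (K0+1)) ≤ 1 := (hF01 _).2
      have hS4 : 0 ≤ F (t 1) := (hF01 _).1
      linarith
    have hmeas : I ≤ h + h * ((∑ j ∈ Finset.range K0, F (t (j+1))) + 1) := by
      have e1 : a - (K0:ℝ) * h = h := by linarith [hKh]
      have e2 : f (t (K0+1)) ≤ 1 := hfle1 _
      have e3 : 0 ≤ f (t (K0+1)) := hfnn _
      have e4 : h * (∑ j ∈ Finset.range K0, f (t (j+1)))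
          ≤ h * ((∑ j ∈ Finset.range K0, F (t (j+1))) + 1) :=
        mul_le_mul_of_nonneg_left hSle (le_of_lt hhpos)
      have e5 : (a - (K0:ℝ) * h) * f (t (K0+1)) ≤ h := by
        rw [e1]
        nlinarith
      have e0 : a * (f (t 1) - f (-1)) = a * f (t 1) := by rw [hfm1]; ring
      linarith [hstep1, hstep2, hmeas_sum, e0]
    -- B-side identity
    have hB_sum : ∑ j ∈ Finset.range (K0+1), (a - t (j+1)) * (F (t (j+1)) - F (t j))
        = (a - ((K0:ℝ)+1) * h) * F (t (K0+1)) - a * F (t 0)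
          + h * ∑ j ∈ Finset.range (K0+1), F (t j) := by
      have := NKLB.abel_sum (fun j => F (t j)) a h (K0+1)
      push_cast at this
      rw [← this]
      exact Finset.sum_congr rfl fun j _ => by rw [htcast j]
    have hteleF := Finset.sum_range_sub (fun j => F (t j)) (K0+1)
    have hBexp : B = (∑ j ∈ Finset.range (K0+1), (a - t (j+1)) * (F (t (j+1)) - F (t j)))
        - ε * (F (t (K0+1)) - F (t 0)) := by
      rw [hB, ← hteleF, Finset.mul_sum, ← Finset.sum_sub_distrib]
      exact Finset.sum_congr rfl fun j _ => by ring
    have hF00 : F (t 0) = 0 := by rw [ht0]; exact hF0 0 le_rfl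
    have hsum_shift : ∑ j ∈ Finset.range (K0+1), F (t j)
        = (∑ j ∈ Finset.range K0, F (t (j+1))) + F (t 0) :=
      Finset.sum_range_succ' (fun j => F (t j)) K0
    clear_value f I d h t ε Q B hfn
    have hBge : h * (∑ j ∈ Finset.range K0, F (t (j+1))) - ε ≤ B := by
      have e8 : a - ((K0:ℝ)+1) * h = 0 := by linarith [hKh]
      have e10 : ε * (F (t (K0+1)) - F (t 0)) ≤ ε := by
        have e6 : F (t (K0+1)) ≤ 1 := (hF01 _).2
        have e7 : 0 ≤ F (t 0) := (hF01 _).1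
        calc ε * (F (t (K0+1)) - F (t 0)) ≤ ε * 1 :=
              mul_le_mul_of_nonneg_left ((sub_le_self _ e7).trans e6) (le_of_lt hεpos)
          _ = ε := mul_one ε
      have e11 : (∑ j ∈ Finset.range (K0+1), (a - t (j+1)) * (F (t (j+1)) - F (t j)))
          = h * (∑ j ∈ Finset.range K0, F (t (j+1))) := by
        rw [hB_sum, hsum_shift, hF00, e8]
        ring
      rw [hBexp, e11]
      exact sub_le_sub le_rfl e10
    -- conclude w ≤ B
    have hwB : w ≤ B := by
      have e9 : h + h * ((∑ j ∈ Finset.range K0, F (t (j+1))) + 1)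
          = 2*h + h * (∑ j ∈ Finset.range K0, F (t (j+1))) := by ring
      linarith [hmeas, hBge, e9, h4h, hdpos]
    have hfinal : (w:EReal)
        ≤ liminf (fun n => ((KL (push (p n) (φ n)) (unif (M n)) / n : ℝ) : EReal)) atTop :=
      le_trans (EReal.coe_le_coe_iff.2 hwB) hlimB
    exact absurd hw1 (not_lt.2 hfinal)


end
end
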